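/- arXiv:2212.11865 — 8 statements merged into one kernel-verified Lean document; each statement's English description precedes it below -/
import Mathlib

section
/- Let C be a monoidal category with tensor ⊗, unit I, associator α, left unitor λ and right unitor ρ, equipped with a second bifunctor ⊙ that is a strict monoidal structure with the same unit and satisfies the strict interchange law and coherence compatibility (as in the context). Then the Eckmann–Hilton maps σ_{a,b} : a⊗b → b⊗a, defined as the composite a⊗b = (I⊙a)⊗(b⊙I) = (I⊗b)⊙(a⊗I) --(λ_b ⊙ ρ_a)--> b⊙a --(ρ_b⁻¹ ⊙ λ_a⁻¹)--> (b⊗I)⊙(I⊗a) = (b⊙I)⊗(I⊙a) = b⊗a, form a natural isomorphism satisfying both hexagon identities; that is, σ is a braiding making (C, ⊗, I, σ) a braided monoidal category. -/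
open CategoryTheory Category MonoidalCategory

universe v u

/-- A second bifunctor `⊙` on a monoidal category which is a strict monoidal structure with
the same unit, satisfies the strict interchange law with `⊗`, and is compatible with the
coherence isomorphisms of `⊗`.  (This is the dimension-shift description of a
doubly-degenerate category enriched in bicategories and strict functors: `⊗` is the weak
vertical tensor and `⊙` the strict horizontal tensor.) -/
structure InterchangeStruct (C : Type u) [Category.{v} C] [MonoidalCategory C] where
  /-- the strict horizontal tensor `a ⊙ b` on objects -/
  h : C → C → C
  /-- the strict horizontal tensor `f ⊙ g` on morphisms -/
  hMap : ∀ {a b c d : C}, (a ⟶ b) → (c ⟶ d) → (h a c ⟶ h b d)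
  hMap_id : ∀ a b : C, hMap (𝟙 a) (𝟙 b) = 𝟙 (h a b)
  hMap_comp : ∀ {a b c a' b' c' : C} (f : a ⟶ b) (g : b ⟶ c) (f' : a' ⟶ b') (g' : b' ⟶ c'),
    hMap (f ≫ g) (f' ≫ g') = hMap f f' ≫ hMap g g'
  assoc_obj : ∀ a b c : C, h (h a b) c = h a (h b c)
  assoc_map : ∀ {a a' b b' c c' : C} (f : a ⟶ a') (g : b ⟶ b') (k : c ⟶ c'),
    hMap (hMap f g) k =
      eqToHom (assoc_obj a b c) ≫ hMap f (hMap g k) ≫ eqToHom (assoc_obj a' b' c').symm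
  unit_left : ∀ a : C, h (𝟙_ C) a = a
  unit_right : ∀ a : C, h a (𝟙_ C) = a
  unit_left_map : ∀ {a b : C} (f : a ⟶ b),
    hMap (𝟙 (𝟙_ C)) f = eqToHom (unit_left a) ≫ f ≫ eqToHom (unit_left b).symm
  unit_right_map : ∀ {a b : C} (f : a ⟶ b),
    hMap f (𝟙 (𝟙_ C)) = eqToHom (unit_right a) ≫ f ≫ eqToHom (unit_right b).symm
  interchange_obj : ∀ a b c d : C, h (a ⊗ b) (c ⊗ d) = (h a c) ⊗ (h b d)
  interchange_map : ∀ {a a' b b' c c' d d' : C}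
    (f : a ⟶ a') (g : b ⟶ b') (p : c ⟶ c') (q : d ⟶ d'),
    hMap (f ⊗ₘ g) (p ⊗ₘ q) =
      eqToHom (interchange_obj a b c d) ≫ (hMap f p ⊗ₘ hMap g q) ≫
        eqToHom (interchange_obj a' b' c' d').symm
  assoc_compat : ∀ a b c a' b' c' : C,
    hMap (α_ a b c).hom (α_ a' b' c').hom =
      eqToHom (by rw [interchange_obj, interchange_obj]) ≫
        (α_ (h a a') (h b b') (h c c')).hom ≫
        eqToHom (by rw [interchange_obj, interchange_obj])
  lunitor_compat : ∀ a b : C,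
    hMap (λ_ a).hom (λ_ b).hom =
      eqToHom (by rw [interchange_obj, unit_left]) ≫ (λ_ (h a b)).hom
  runitor_compat : ∀ a b : C,
    hMap (ρ_ a).hom (ρ_ b).hom =
      eqToHom (by rw [interchange_obj, unit_right]) ≫ (ρ_ (h a b)).hom

/-- The Eckmann–Hilton map
`a⊗b = (I⊙a)⊗(b⊙I) = (I⊗b)⊙(a⊗I) --(λ_b ⊙ ρ_a)--> b⊙a
     --(ρ_b⁻¹ ⊙ λ_a⁻¹)--> (b⊗I)⊙(I⊗a) = (b⊙I)⊗(I⊙a) = b⊗a`. -/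
def EHsigma {C : Type u} [Category.{v} C] [MonoidalCategory C]
    (S : InterchangeStruct C) (a b : C) : a ⊗ b ⟶ b ⊗ a :=
  eqToHom (show a ⊗ b = S.h (𝟙_ C ⊗ b) (a ⊗ 𝟙_ C) by
      rw [S.interchange_obj, S.unit_left, S.unit_right]) ≫
    S.hMap (λ_ b).hom (ρ_ a).hom ≫ S.hMap (ρ_ b).inv (λ_ a).inv ≫
    eqToHom (show S.h (b ⊗ 𝟙_ C) (𝟙_ C ⊗ a) = b ⊗ a by
      rw [S.interchange_obj, S.unit_left, S.unit_right])

namespace EHAux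

variable {C : Type u} [Category.{v} C] [MonoidalCategory C] (S : InterchangeStruct C)

lemma hMap_eqToHom {X X' Y Y' : C} (p : X = X') (q : Y = Y') :
    S.hMap (eqToHom p) (eqToHom q) = eqToHom (by rw [p, q]) := by
  subst p; subst q; simp [S.hMap_id]

lemma hMap_id_eqToHom (X : C) {Y Y' : C} (q : Y = Y') :
    S.hMap (𝟙 X) (eqToHom q) = eqToHom (by rw [q]) := by
  subst q; simp [S.hMap_id]

lemma hMap_eqToHom_id {X X' : C} (p : X = X') (Y : C) :
    S.hMap (eqToHom p) (𝟙 Y) = eqToHom (by rw [p]) := by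
  subst p; simp [S.hMap_id]

lemma hMap_id_transport {X X' : C} (p : X = X') {Y Y' : C} (g : Y ⟶ Y') :
    S.hMap (𝟙 X') g = eqToHom (by rw [p]) ≫ S.hMap (𝟙 X) g ≫ eqToHom (by rw [p]) := by
  subst p; simp

lemma hMap_transport_id {Y Y' : C} (p : Y = Y') {X X' : C} (f : X ⟶ X') :
    S.hMap f (𝟙 Y') = eqToHom (by rw [p]) ≫ S.hMap f (𝟙 Y) ≫ eqToHom (by rw [p]) := by
  subst p; simp

lemma eqToHom_tensor {X X' Y Y' : C} (p : X = X') (q : Y = Y') :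
    (eqToHom p ⊗ₘ eqToHom q) = eqToHom (by rw [p, q]) := by
  subst p; subst q; simp

lemma lunitor_transport {X X' : C} (p : X = X') :
    (λ_ X).hom = eqToHom (by rw [p]) ≫ (λ_ X').hom ≫ eqToHom p.symm := by
  subst p; simp

/-- `pc F G hA hB` : the morphism obtained from `hMap F G` by identifying its
domain/codomain with `A`/`B` via equalities of objects. -/
def pc {X X' Y Y' A B : C} (F : X ⟶ X') (G : Y ⟶ Y')
    (hA : A = S.h X Y) (hB : S.h X' Y' = B) : A ⟶ B :=
  eqToHom hA ≫ S.hMap F G ≫ eqToHom hB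

lemma pc_comp {X X' X'' Y Y' Y'' A M B : C} (F : X ⟶ X') (G : Y ⟶ Y')
    (F' : X' ⟶ X'') (G' : Y' ⟶ Y'')
    (hA : A = S.h X Y) (hB : S.h X' Y' = M) (hB' : M = S.h X' Y') (hC : S.h X'' Y'' = B) :
    pc S F G hA hB ≫ pc S F' G' hB' hC = pc S (F ≫ F') (G ≫ G') hA hC := by
  simp [pc, S.hMap_comp, eqToHom_trans_assoc]

lemma pc_id {X Y A B : C} (hA : A = S.h X Y) (hB : S.h X Y = B) :
    pc S (𝟙 X) (𝟙 Y) hA hB = eqToHom (hA.trans hB) := by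
  simp [pc, S.hMap_id]

lemma pc_tensor {X X' Y Y' A B X₂ X₂' Y₂ Y₂' A₂ B₂ : C}
    (F : X ⟶ X') (G : Y ⟶ Y') (F' : X₂ ⟶ X₂') (G' : Y₂ ⟶ Y₂')
    (hA : A = S.h X Y) (hB : S.h X' Y' = B) (hA' : A₂ = S.h X₂ Y₂) (hB' : S.h X₂' Y₂' = B₂) :
    (pc S F G hA hB ⊗ₘ pc S F' G' hA' hB') =
      pc S (F ⊗ₘ F') (G ⊗ₘ G')
        (by rw [hA, hA', ← S.interchange_obj])
        (by rw [← hB, ← hB', ← S.interchange_obj]) := by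
  simp only [pc, S.interchange_map, ← tensorHom_comp_tensorHom, eqToHom_tensor, assoc, eqToHom_trans_assoc,
    eqToHom_trans]

end EHAux
namespace EHAux

variable {C : Type u} [Category.{v} C] [MonoidalCategory C] (S : InterchangeStruct C)

lemma alpha_pc (u v w u' v' w' : C) {U V W : C}
    (pu : S.h u u' = U) (pv : S.h v v' = V) (pw : S.h w w' = W)
    (E1 : (U ⊗ V) ⊗ W = S.h ((u ⊗ v) ⊗ w) ((u' ⊗ v') ⊗ w'))
    (E2 : S.h (u ⊗ (v ⊗ w)) (u' ⊗ (v' ⊗ w')) = U ⊗ (V ⊗ W)) :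
    (α_ U V W).hom = pc S (α_ u v w).hom (α_ u' v' w').hom E1 E2 := by
  subst pu; subst pv; subst pw
  simp [pc, S.assoc_compat, eqToHom_trans_assoc, eqToHom_trans]

lemma alpha_inv_pc (u v w u' v' w' : C) {U V W : C}
    (pu : S.h u u' = U) (pv : S.h v v' = V) (pw : S.h w w' = W)
    (E1 : U ⊗ (V ⊗ W) = S.h (u ⊗ (v ⊗ w)) (u' ⊗ (v' ⊗ w')))
    (E2 : S.h ((u ⊗ v) ⊗ w) ((u' ⊗ v') ⊗ w') = (U ⊗ V) ⊗ W) :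
    (α_ U V W).inv = pc S (α_ u v w).inv (α_ u' v' w').inv E1 E2 := by
  have h1 : (α_ U V W).hom ≫ pc S (α_ u v w).inv (α_ u' v' w').inv E1 E2 = 𝟙 _ := by
    rw [alpha_pc S u v w u' v' w' pu pv pw E2.symm E1.symm, pc_comp]
    simp [pc_id]
  calc (α_ U V W).inv
      = (α_ U V W).inv ≫ ((α_ U V W).hom ≫ pc S (α_ u v w).inv (α_ u' v' w').inv E1 E2) := by
        rw [h1]; simp
    _ = pc S (α_ u v w).inv (α_ u' v' w').inv E1 E2 := by simp

/-- the two halves of the Eckmann–Hilton rotation -/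
def kap (X : C) : 𝟙_ C ⊗ X ⟶ X ⊗ 𝟙_ C := (λ_ X).hom ≫ (ρ_ X).inv

def kap' (X : C) : X ⊗ 𝟙_ C ⟶ 𝟙_ C ⊗ X := (ρ_ X).hom ≫ (λ_ X).inv

lemma sigma_pc (a b : C)
    (hA : a ⊗ b = S.h (𝟙_ C ⊗ b) (a ⊗ 𝟙_ C)) (hB : S.h (b ⊗ 𝟙_ C) (𝟙_ C ⊗ a) = b ⊗ a) :
    EHsigma S a b = pc S (kap b) (kap' a) hA hB := by
  simp [EHsigma, pc, kap, kap', S.hMap_comp]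

lemma id_pc_r (c : C) (hA : c = S.h c (𝟙_ C)) (hB : S.h c (𝟙_ C) = c) :
    (𝟙 c) = pc S (𝟙 c) (𝟙 (𝟙_ C)) hA hB := by
  rw [pc_id]; simp

lemma id_pc_l (c : C) (hA : c = S.h (𝟙_ C) c) (hB : S.h (𝟙_ C) c = c) :
    (𝟙 c) = pc S (𝟙 (𝟙_ C)) (𝟙 c) hA hB := by
  rw [pc_id]; simp

end EHAux
namespace EHAux

variable {C : Type u} [Category.{v} C] [MonoidalCategory C] (S : InterchangeStruct C)

lemma E2core :
    S.hMap (𝟙 (𝟙_ C ⊗ 𝟙_ C)) (λ_ (𝟙_ C)).hom =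
      eqToHom (show S.h (𝟙_ C ⊗ 𝟙_ C) (𝟙_ C ⊗ 𝟙_ C) = S.h (𝟙_ C ⊗ 𝟙_ C) (𝟙_ C) by
        rw [S.interchange_obj, S.unit_left, S.unit_right]) := by
  have h1 : S.hMap (𝟙 (𝟙_ C ⊗ 𝟙_ C)) (λ_ (𝟙_ C)).hom
      = S.hMap ((λ_ (𝟙_ C)).hom ≫ (λ_ (𝟙_ C)).inv) ((λ_ (𝟙_ C)).hom ≫ 𝟙 (𝟙_ C)) := by simp
  rw [h1, S.hMap_comp, S.lunitor_compat, S.unit_right_map,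
    lunitor_transport (S.unit_left (𝟙_ C))]
  simp [eqToHom_trans_assoc, eqToHom_trans]

lemma E2core' :
    S.hMap (λ_ (𝟙_ C)).hom (𝟙 (𝟙_ C ⊗ 𝟙_ C)) =
      eqToHom (show S.h (𝟙_ C ⊗ 𝟙_ C) (𝟙_ C ⊗ 𝟙_ C) = S.h (𝟙_ C) (𝟙_ C ⊗ 𝟙_ C) by
        rw [S.interchange_obj, S.unit_left, S.unit_left]) := by
  have h1 : S.hMap (λ_ (𝟙_ C)).hom (𝟙 (𝟙_ C ⊗ 𝟙_ C))
      = S.hMap ((λ_ (𝟙_ C)).hom ≫ 𝟙 (𝟙_ C)) ((λ_ (𝟙_ C)).hom ≫ (λ_ (𝟙_ C)).inv) := by simp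
  rw [h1, S.hMap_comp, S.lunitor_compat, S.unit_left_map,
    lunitor_transport (S.unit_left (𝟙_ C))]
  simp [eqToHom_trans_assoc, eqToHom_trans]

lemma BBmid (Y : C) :
    S.hMap (𝟙 (S.h Y (𝟙_ C ⊗ 𝟙_ C))) (λ_ (𝟙_ C)).hom =
      eqToHom (show S.h (S.h Y (𝟙_ C ⊗ 𝟙_ C)) (𝟙_ C ⊗ 𝟙_ C) = S.h (S.h Y (𝟙_ C ⊗ 𝟙_ C)) (𝟙_ C) by
        simp only [S.assoc_obj, S.interchange_obj, S.unit_left, S.unit_right]) := by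
  have h1 : (𝟙 (S.h Y (𝟙_ C ⊗ 𝟙_ C))) = S.hMap (𝟙 Y) (𝟙 (𝟙_ C ⊗ 𝟙_ C)) := (S.hMap_id _ _).symm
  rw [h1, S.assoc_map, E2core, hMap_id_eqToHom]
  simp [eqToHom_trans]

lemma BBmid' (X : C) :
    S.hMap (λ_ (𝟙_ C)).hom (𝟙 (S.h (𝟙_ C ⊗ 𝟙_ C) X)) =
      eqToHom (show S.h (𝟙_ C ⊗ 𝟙_ C) (S.h (𝟙_ C ⊗ 𝟙_ C) X) = S.h (𝟙_ C) (S.h (𝟙_ C ⊗ 𝟙_ C) X) by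
        simp only [← S.assoc_obj, S.interchange_obj, S.unit_left, S.unit_right]) := by
  have h1 : (𝟙 (S.h (𝟙_ C ⊗ 𝟙_ C) X)) = S.hMap (𝟙 (𝟙_ C ⊗ 𝟙_ C)) (𝟙 X) := (S.hMap_id _ _).symm
  have h2 := S.assoc_map (λ_ (𝟙_ C)).hom (𝟙 (𝟙_ C ⊗ 𝟙_ C)) (𝟙 X)
  rw [E2core', hMap_eqToHom_id] at h2
  rw [h1]
  calc S.hMap (λ_ (𝟙_ C)).hom (S.hMap (𝟙 (𝟙_ C ⊗ 𝟙_ C)) (𝟙 X))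
      = eqToHom (S.assoc_obj _ _ _).symm ≫
          (eqToHom (S.assoc_obj _ _ _) ≫
            S.hMap (λ_ (𝟙_ C)).hom (S.hMap (𝟙 (𝟙_ C ⊗ 𝟙_ C)) (𝟙 X)) ≫
            eqToHom (S.assoc_obj _ _ _).symm) ≫ eqToHom (S.assoc_obj _ _ _) := by
        simp [eqToHom_trans_assoc, eqToHom_trans]
    _ = eqToHom (S.assoc_obj _ _ _).symm ≫ eqToHom _ ≫ eqToHom (S.assoc_obj _ _ _) := by
        rw [← h2]
    _ = _ := by simp [eqToHom_trans]

end EHAux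
namespace EHAux

variable {C : Type u} [Category.{v} C] [MonoidalCategory C] (S : InterchangeStruct C)

lemma BB (b c : C) :
    S.hMap (𝟙 (b ⊗ c)) (λ_ (𝟙_ C)).hom =
      eqToHom (show S.h (b ⊗ c) (𝟙_ C ⊗ 𝟙_ C) = S.h (b ⊗ c) (𝟙_ C) by
        simp only [S.interchange_obj, S.unit_right]) := by
  have hE : S.h (b ⊗ c) (𝟙_ C ⊗ 𝟙_ C) = b ⊗ c := by
    simp only [S.interchange_obj, S.unit_right]
  rw [hMap_id_transport S hE, BBmid]
  simp [eqToHom_trans]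

lemma BB_inv (b c : C) :
    S.hMap (𝟙 (b ⊗ c)) (λ_ (𝟙_ C)).inv =
      eqToHom (show S.h (b ⊗ c) (𝟙_ C) = S.h (b ⊗ c) (𝟙_ C ⊗ 𝟙_ C) by
        simp only [S.interchange_obj, S.unit_right]) := by
  have h1 : S.hMap (𝟙 (b ⊗ c)) (λ_ (𝟙_ C)).hom ≫ S.hMap (𝟙 (b ⊗ c)) (λ_ (𝟙_ C)).inv
      = 𝟙 _ := by
    rw [← S.hMap_comp]; simp [S.hMap_id]
  rw [BB] at h1
  calc S.hMap (𝟙 (b ⊗ c)) (λ_ (𝟙_ C)).inv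
      = eqToHom (show S.h (b ⊗ c) (𝟙_ C) = S.h (b ⊗ c) (𝟙_ C ⊗ 𝟙_ C) by
          simp only [S.interchange_obj, S.unit_right]) ≫
        (eqToHom (show S.h (b ⊗ c) (𝟙_ C ⊗ 𝟙_ C) = S.h (b ⊗ c) (𝟙_ C) by
          simp only [S.interchange_obj, S.unit_right]) ≫
          S.hMap (𝟙 (b ⊗ c)) (λ_ (𝟙_ C)).inv) := by
        simp [eqToHom_trans_assoc]
    _ = _ := by rw [h1]; simp

lemma BB' (x y : C) :
    S.hMap (λ_ (𝟙_ C)).hom (𝟙 (x ⊗ y)) =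
      eqToHom (show S.h (𝟙_ C ⊗ 𝟙_ C) (x ⊗ y) = S.h (𝟙_ C) (x ⊗ y) by
        simp only [S.interchange_obj, S.unit_left]) := by
  have hE : S.h (𝟙_ C ⊗ 𝟙_ C) (x ⊗ y) = x ⊗ y := by
    simp only [S.interchange_obj, S.unit_left]
  rw [hMap_transport_id S hE, BBmid']
  simp [eqToHom_trans]

lemma BB'_inv (x y : C) :
    S.hMap (λ_ (𝟙_ C)).inv (𝟙 (x ⊗ y)) =
      eqToHom (show S.h (𝟙_ C) (x ⊗ y) = S.h (𝟙_ C ⊗ 𝟙_ C) (x ⊗ y) by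
        simp only [S.interchange_obj, S.unit_left]) := by
  have h1 : S.hMap (λ_ (𝟙_ C)).hom (𝟙 (x ⊗ y)) ≫ S.hMap (λ_ (𝟙_ C)).inv (𝟙 (x ⊗ y))
      = 𝟙 _ := by
    rw [← S.hMap_comp]; simp [S.hMap_id]
  rw [BB'] at h1
  calc S.hMap (λ_ (𝟙_ C)).inv (𝟙 (x ⊗ y))
      = eqToHom (show S.h (𝟙_ C) (x ⊗ y) = S.h (𝟙_ C ⊗ 𝟙_ C) (x ⊗ y) by
          simp only [S.interchange_obj, S.unit_left]) ≫
        (eqToHom (show S.h (𝟙_ C ⊗ 𝟙_ C) (x ⊗ y) = S.h (𝟙_ C) (x ⊗ y) by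
          simp only [S.interchange_obj, S.unit_left]) ≫
          S.hMap (λ_ (𝟙_ C)).inv (𝟙 (x ⊗ y))) := by
        simp [eqToHom_trans_assoc]
    _ = _ := by rw [h1]; simp

end EHAux
namespace EHAux

variable {C : Type u} [Category.{v} C] [MonoidalCategory C] (S : InterchangeStruct C)

lemma pad_fwd1 (a b c : C)
    (hA : a ⊗ (b ⊗ c) = S.h (𝟙_ C ⊗ (b ⊗ c)) (a ⊗ (𝟙_ C ⊗ 𝟙_ C)))
    (hB : S.h (𝟙_ C ⊗ (b ⊗ c)) (a ⊗ 𝟙_ C) = a ⊗ (b ⊗ c)) :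
    pc S (𝟙 (𝟙_ C ⊗ (b ⊗ c))) (𝟙 a ⊗ₘ (λ_ (𝟙_ C)).hom) hA hB = 𝟙 (a ⊗ (b ⊗ c)) := by
  unfold pc
  rw [← id_tensorHom_id]
  rw [S.interchange_map, S.unit_left_map (𝟙 a), BB]
  simp [eqToHom_tensor, eqToHom_trans]

lemma pad_fwd2 (a b c : C)
    (hA : (b ⊗ c) ⊗ a = S.h ((b ⊗ c) ⊗ 𝟙_ C) (𝟙_ C ⊗ a))
    (hB : S.h ((b ⊗ c) ⊗ 𝟙_ C) ((𝟙_ C ⊗ 𝟙_ C) ⊗ a) = (b ⊗ c) ⊗ a) :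
    pc S (𝟙 ((b ⊗ c) ⊗ 𝟙_ C)) ((λ_ (𝟙_ C)).inv ⊗ₘ 𝟙 a) hA hB = 𝟙 ((b ⊗ c) ⊗ a) := by
  unfold pc
  rw [← id_tensorHom_id]
  rw [S.interchange_map, S.unit_left_map (𝟙 a), BB_inv]
  simp [eqToHom_tensor, eqToHom_trans]

lemma sigma_flex_fwd (a b c : C)
    (hA : a ⊗ (b ⊗ c) = S.h (𝟙_ C ⊗ (b ⊗ c)) (a ⊗ (𝟙_ C ⊗ 𝟙_ C)))
    (hB : S.h ((b ⊗ c) ⊗ 𝟙_ C) ((𝟙_ C ⊗ 𝟙_ C) ⊗ a) = (b ⊗ c) ⊗ a) :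
    EHsigma S a (b ⊗ c) =
      pc S (kap (b ⊗ c))
        ((𝟙 a ⊗ₘ (λ_ (𝟙_ C)).hom) ≫ kap' a ≫ ((λ_ (𝟙_ C)).inv ⊗ₘ 𝟙 a)) hA hB := by
  have M1 : S.h (𝟙_ C ⊗ (b ⊗ c)) (a ⊗ 𝟙_ C) = a ⊗ (b ⊗ c) := by
    simp only [S.interchange_obj, S.unit_left, S.unit_right]
  have M3 : S.h ((b ⊗ c) ⊗ 𝟙_ C) (𝟙_ C ⊗ a) = (b ⊗ c) ⊗ a := by
    simp only [S.interchange_obj, S.unit_left, S.unit_right]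
  have split : pc S (𝟙 (𝟙_ C ⊗ (b ⊗ c))) (𝟙 a ⊗ₘ (λ_ (𝟙_ C)).hom) hA M1 ≫
      pc S (kap (b ⊗ c)) (kap' a) M1.symm M3 ≫
      pc S (𝟙 ((b ⊗ c) ⊗ 𝟙_ C)) ((λ_ (𝟙_ C)).inv ⊗ₘ 𝟙 a) M3.symm hB =
      pc S (kap (b ⊗ c))
        ((𝟙 a ⊗ₘ (λ_ (𝟙_ C)).hom) ≫ kap' a ≫ ((λ_ (𝟙_ C)).inv ⊗ₘ 𝟙 a)) hA hB := by
    rw [pc_comp, pc_comp]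
    simp only [id_comp, comp_id]
  rw [← split, pad_fwd1, pad_fwd2, id_comp, comp_id]
  exact sigma_pc S a (b ⊗ c) M1.symm M3

lemma pad_rev1 (x y z : C)
    (hA : (x ⊗ y) ⊗ z = S.h ((𝟙_ C ⊗ 𝟙_ C) ⊗ z) ((x ⊗ y) ⊗ 𝟙_ C))
    (hB : S.h (𝟙_ C ⊗ z) ((x ⊗ y) ⊗ 𝟙_ C) = (x ⊗ y) ⊗ z) :
    pc S ((λ_ (𝟙_ C)).hom ⊗ₘ 𝟙 z) (𝟙 ((x ⊗ y) ⊗ 𝟙_ C)) hA hB = 𝟙 ((x ⊗ y) ⊗ z) := by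
  unfold pc
  rw [← id_tensorHom_id]
  rw [S.interchange_map, S.unit_right_map (𝟙 z), BB']
  simp [eqToHom_tensor, eqToHom_trans]

lemma pad_rev2 (x y z : C)
    (hA : z ⊗ (x ⊗ y) = S.h (z ⊗ 𝟙_ C) (𝟙_ C ⊗ (x ⊗ y)))
    (hB : S.h (z ⊗ (𝟙_ C ⊗ 𝟙_ C)) (𝟙_ C ⊗ (x ⊗ y)) = z ⊗ (x ⊗ y)) :
    pc S (𝟙 z ⊗ₘ (λ_ (𝟙_ C)).inv) (𝟙 (𝟙_ C ⊗ (x ⊗ y))) hA hB = 𝟙 (z ⊗ (x ⊗ y)) := by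
  unfold pc
  rw [← id_tensorHom_id]
  rw [S.interchange_map, S.unit_right_map (𝟙 z), BB'_inv]
  simp [eqToHom_tensor, eqToHom_trans]

lemma sigma_flex_rev (x y z : C)
    (hA : (x ⊗ y) ⊗ z = S.h ((𝟙_ C ⊗ 𝟙_ C) ⊗ z) ((x ⊗ y) ⊗ 𝟙_ C))
    (hB : S.h (z ⊗ (𝟙_ C ⊗ 𝟙_ C)) (𝟙_ C ⊗ (x ⊗ y)) = z ⊗ (x ⊗ y)) :
    EHsigma S (x ⊗ y) z =
      pc S (((λ_ (𝟙_ C)).hom ⊗ₘ 𝟙 z) ≫ kap z ≫ (𝟙 z ⊗ₘ (λ_ (𝟙_ C)).inv))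
        (kap' (x ⊗ y)) hA hB := by
  have M1 : S.h (𝟙_ C ⊗ z) ((x ⊗ y) ⊗ 𝟙_ C) = (x ⊗ y) ⊗ z := by
    simp only [S.interchange_obj, S.unit_left, S.unit_right]
  have M3 : S.h (z ⊗ 𝟙_ C) (𝟙_ C ⊗ (x ⊗ y)) = z ⊗ (x ⊗ y) := by
    simp only [S.interchange_obj, S.unit_left, S.unit_right]
  have split : pc S ((λ_ (𝟙_ C)).hom ⊗ₘ 𝟙 z) (𝟙 ((x ⊗ y) ⊗ 𝟙_ C)) hA M1 ≫
      pc S (kap z) (kap' (x ⊗ y)) M1.symm M3 ≫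
      pc S (𝟙 z ⊗ₘ (λ_ (𝟙_ C)).inv) (𝟙 (𝟙_ C ⊗ (x ⊗ y))) M3.symm hB =
      pc S (((λ_ (𝟙_ C)).hom ⊗ₘ 𝟙 z) ≫ kap z ≫ (𝟙 z ⊗ₘ (λ_ (𝟙_ C)).inv))
        (kap' (x ⊗ y)) hA hB := by
    rw [pc_comp, pc_comp]
    simp only [id_comp, comp_id]
  rw [← split, pad_rev1, pad_rev2, id_comp, comp_id]
  exact sigma_pc S (x ⊗ y) z M1.symm M3

end EHAux
namespace EHAux

variable {C : Type u} [Category.{v} C] [MonoidalCategory C] (S : InterchangeStruct C)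

lemma tensor_pc {a a' b b' : C} (f : a ⟶ a') (g : b ⟶ b')
    (hA : a ⊗ b = S.h (𝟙_ C ⊗ b) (a ⊗ 𝟙_ C)) (hB : S.h (𝟙_ C ⊗ b') (a' ⊗ 𝟙_ C) = a' ⊗ b') :
    f ⊗ₘ g = pc S (𝟙 (𝟙_ C) ⊗ₘ g) (f ⊗ₘ 𝟙 (𝟙_ C)) hA hB := by
  unfold pc
  rw [S.interchange_map, S.unit_left_map f, S.unit_right_map g]
  simp only [← tensorHom_comp_tensorHom, eqToHom_tensor, assoc, eqToHom_trans_assoc, eqToHom_trans,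
    eqToHom_refl, comp_id, id_comp]

lemma tensor_pc' {a a' b b' : C} (g : b ⟶ b') (f : a ⟶ a')
    (hA : b ⊗ a = S.h (b ⊗ 𝟙_ C) (𝟙_ C ⊗ a)) (hB : S.h (b' ⊗ 𝟙_ C) (𝟙_ C ⊗ a') = b' ⊗ a') :
    g ⊗ₘ f = pc S (g ⊗ₘ 𝟙 (𝟙_ C)) (𝟙 (𝟙_ C) ⊗ₘ f) hA hB := by
  unfold pc
  rw [S.interchange_map, S.unit_right_map g, S.unit_left_map f]
  simp only [← tensorHom_comp_tensorHom, eqToHom_tensor, assoc, eqToHom_trans_assoc, eqToHom_trans,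
    eqToHom_refl, comp_id, id_comp]

lemma sigma_natural {a a' b b' : C} (f : a ⟶ a') (g : b ⟶ b') :
    (f ⊗ₘ g) ≫ EHsigma S a' b' = EHsigma S a b ≫ (g ⊗ₘ f) := by
  have hA : a ⊗ b = S.h (𝟙_ C ⊗ b) (a ⊗ 𝟙_ C) := by
    simp only [S.interchange_obj, S.unit_left, S.unit_right]
  have hM : S.h (𝟙_ C ⊗ b') (a' ⊗ 𝟙_ C) = a' ⊗ b' := by
    simp only [S.interchange_obj, S.unit_left, S.unit_right]
  have hN : S.h (b ⊗ 𝟙_ C) (𝟙_ C ⊗ a) = b ⊗ a := by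
    simp only [S.interchange_obj, S.unit_left, S.unit_right]
  have hB : S.h (b' ⊗ 𝟙_ C) (𝟙_ C ⊗ a') = b' ⊗ a' := by
    simp only [S.interchange_obj, S.unit_left, S.unit_right]
  rw [tensor_pc S f g hA hM, sigma_pc S a' b' hM.symm hB, pc_comp,
    sigma_pc S a b hA hN, tensor_pc' S g f hN.symm hB, pc_comp]
  have e1 : (𝟙 (𝟙_ C) ⊗ₘ g) ≫ kap b' = kap b ≫ (g ⊗ₘ 𝟙 (𝟙_ C)) := by
    simp [kap]
  have e2 : (f ⊗ₘ 𝟙 (𝟙_ C)) ≫ kap' a' = kap' a ≫ (𝟙 (𝟙_ C) ⊗ₘ f) := by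
    simp [kap']
  rw [e1, e2]

/-- the Eckmann–Hilton braiding as an isomorphism -/
def sigmaIso (a b : C) : a ⊗ b ≅ b ⊗ a where
  hom := EHsigma S a b
  inv := pc S (kap' b) (kap a)
    (by simp only [S.interchange_obj, S.unit_left, S.unit_right])
    (by simp only [S.interchange_obj, S.unit_left, S.unit_right])
  hom_inv_id := by
    rw [sigma_pc S a b
      (by simp only [S.interchange_obj, S.unit_left, S.unit_right])
      (by simp only [S.interchange_obj, S.unit_left, S.unit_right]), pc_comp]
    simp [kap, kap', pc_id]
  inv_hom_id := by
    rw [sigma_pc S a b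
      (by simp only [S.interchange_obj, S.unit_left, S.unit_right])
      (by simp only [S.interchange_obj, S.unit_left, S.unit_right]), pc_comp]
    simp [kap, kap', pc_id]

end EHAux
namespace EHAux

variable {C : Type u} [Category.{v} C] [MonoidalCategory C] (S : InterchangeStruct C)

lemma hex_fwd (a b c : C) :
    (α_ a b c).hom ≫ EHsigma S a (b ⊗ c) ≫ (α_ b c a).hom =
      (EHsigma S a b ⊗ₘ 𝟙 c) ≫ (α_ b a c).hom ≫ (𝟙 b ⊗ₘ EHsigma S a c) := by
  have PA : (a ⊗ b) ⊗ c = S.h ((𝟙_ C ⊗ b) ⊗ c) ((a ⊗ 𝟙_ C) ⊗ 𝟙_ C) := by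
    simp only [S.interchange_obj, S.unit_left, S.unit_right]
  have PB : S.h (b ⊗ (c ⊗ 𝟙_ C)) (𝟙_ C ⊗ (𝟙_ C ⊗ a)) = b ⊗ (c ⊗ a) := by
    simp only [S.interchange_obj, S.unit_left, S.unit_right]
  have J1 : S.h (𝟙_ C ⊗ (b ⊗ c)) (a ⊗ (𝟙_ C ⊗ 𝟙_ C)) = a ⊗ (b ⊗ c) := by
    simp only [S.interchange_obj, S.unit_left, S.unit_right]
  have J2 : S.h ((b ⊗ c) ⊗ 𝟙_ C) ((𝟙_ C ⊗ 𝟙_ C) ⊗ a) = (b ⊗ c) ⊗ a := by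
    simp only [S.interchange_obj, S.unit_left, S.unit_right]
  have Q1 : a ⊗ b = S.h (𝟙_ C ⊗ b) (a ⊗ 𝟙_ C) := by
    simp only [S.interchange_obj, S.unit_left, S.unit_right]
  have Q2 : S.h (b ⊗ 𝟙_ C) (𝟙_ C ⊗ a) = b ⊗ a := by
    simp only [S.interchange_obj, S.unit_left, S.unit_right]
  have Q1' : a ⊗ c = S.h (𝟙_ C ⊗ c) (a ⊗ 𝟙_ C) := by
    simp only [S.interchange_obj, S.unit_left, S.unit_right]
  have Q2' : S.h (c ⊗ 𝟙_ C) (𝟙_ C ⊗ a) = c ⊗ a := by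
    simp only [S.interchange_obj, S.unit_left, S.unit_right]
  rw [alpha_pc S (𝟙_ C) b c a (𝟙_ C) (𝟙_ C) (S.unit_left a) (S.unit_right b)
      (S.unit_right c) PA J1,
    sigma_flex_fwd S a b c J1.symm J2,
    alpha_pc S b c (𝟙_ C) (𝟙_ C) (𝟙_ C) a (S.unit_right b) (S.unit_right c)
      (S.unit_left a) J2.symm PB,
    sigma_pc S a b Q1 Q2, sigma_pc S a c Q1' Q2',
    id_pc_r S c (S.unit_right c).symm (S.unit_right c),
    id_pc_r S b (S.unit_right b).symm (S.unit_right b),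
    pc_tensor, pc_tensor,
    alpha_pc S b (𝟙_ C) c (𝟙_ C) a (𝟙_ C) (S.unit_right b) (S.unit_left a)
      (S.unit_right c)
      (by simp only [S.interchange_obj, S.unit_left, S.unit_right])
      (by simp only [S.interchange_obj, S.unit_left, S.unit_right]),
    pc_comp, pc_comp, pc_comp, pc_comp]
  have eF : (α_ (𝟙_ C) b c).hom ≫ kap (b ⊗ c) ≫ (α_ b c (𝟙_ C)).hom =
      (kap b ⊗ₘ 𝟙 c) ≫ (α_ b (𝟙_ C) c).hom ≫ (𝟙 b ⊗ₘ kap c) := by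
    simp only [kap]
    coherence
  have eG : (α_ a (𝟙_ C) (𝟙_ C)).hom ≫
        ((𝟙 a ⊗ₘ (λ_ (𝟙_ C)).hom) ≫ kap' a ≫ ((λ_ (𝟙_ C)).inv ⊗ₘ 𝟙 a)) ≫
        (α_ (𝟙_ C) (𝟙_ C) a).hom =
      (kap' a ⊗ₘ 𝟙 (𝟙_ C)) ≫ (α_ (𝟙_ C) a (𝟙_ C)).hom ≫ (𝟙 (𝟙_ C) ⊗ₘ kap' a) := by
    simp only [kap']
    coherence
  rw [eF, eG]

end EHAux
namespace EHAux

variable {C : Type u} [Category.{v} C] [MonoidalCategory C] (S : InterchangeStruct C)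

lemma hex_rev (x y z : C) :
    (α_ x y z).inv ≫ EHsigma S (x ⊗ y) z ≫ (α_ z x y).inv =
      (𝟙 x ⊗ₘ EHsigma S y z) ≫ (α_ x z y).inv ≫ (EHsigma S x z ⊗ₘ 𝟙 y) := by
  have E1 : x ⊗ (y ⊗ z) = S.h (𝟙_ C ⊗ (𝟙_ C ⊗ z)) (x ⊗ (y ⊗ 𝟙_ C)) := by
    simp only [S.interchange_obj, S.unit_left, S.unit_right]
  have E2 : S.h ((𝟙_ C ⊗ 𝟙_ C) ⊗ z) ((x ⊗ y) ⊗ 𝟙_ C) = (x ⊗ y) ⊗ z := by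
    simp only [S.interchange_obj, S.unit_left, S.unit_right]
  have J2 : S.h (z ⊗ (𝟙_ C ⊗ 𝟙_ C)) (𝟙_ C ⊗ (x ⊗ y)) = z ⊗ (x ⊗ y) := by
    simp only [S.interchange_obj, S.unit_left, S.unit_right]
  have PB : S.h ((z ⊗ 𝟙_ C) ⊗ 𝟙_ C) ((𝟙_ C ⊗ x) ⊗ y) = (z ⊗ x) ⊗ y := by
    simp only [S.interchange_obj, S.unit_left, S.unit_right]
  have Q1 : y ⊗ z = S.h (𝟙_ C ⊗ z) (y ⊗ 𝟙_ C) := by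
    simp only [S.interchange_obj, S.unit_left, S.unit_right]
  have Q2 : S.h (z ⊗ 𝟙_ C) (𝟙_ C ⊗ y) = z ⊗ y := by
    simp only [S.interchange_obj, S.unit_left, S.unit_right]
  have Q1' : x ⊗ z = S.h (𝟙_ C ⊗ z) (x ⊗ 𝟙_ C) := by
    simp only [S.interchange_obj, S.unit_left, S.unit_right]
  have Q2' : S.h (z ⊗ 𝟙_ C) (𝟙_ C ⊗ x) = z ⊗ x := by
    simp only [S.interchange_obj, S.unit_left, S.unit_right]
  rw [alpha_inv_pc S (𝟙_ C) (𝟙_ C) z x y (𝟙_ C) (S.unit_left x) (S.unit_left y)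
      (S.unit_right z) E1 E2,
    sigma_flex_rev S x y z E2.symm J2,
    alpha_inv_pc S z (𝟙_ C) (𝟙_ C) (𝟙_ C) x y (S.unit_right z) (S.unit_left x)
      (S.unit_left y) J2.symm PB,
    sigma_pc S y z Q1 Q2, sigma_pc S x z Q1' Q2',
    id_pc_l S x (S.unit_left x).symm (S.unit_left x),
    id_pc_l S y (S.unit_left y).symm (S.unit_left y),
    pc_tensor, pc_tensor,
    alpha_inv_pc S (𝟙_ C) z (𝟙_ C) x (𝟙_ C) y (S.unit_left x) (S.unit_right z)
      (S.unit_left y)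
      (by simp only [S.interchange_obj, S.unit_left, S.unit_right])
      (by simp only [S.interchange_obj, S.unit_left, S.unit_right]),
    pc_comp, pc_comp, pc_comp, pc_comp]
  have eF : (α_ (𝟙_ C) (𝟙_ C) z).inv ≫
        (((λ_ (𝟙_ C)).hom ⊗ₘ 𝟙 z) ≫ kap z ≫ (𝟙 z ⊗ₘ (λ_ (𝟙_ C)).inv)) ≫
        (α_ z (𝟙_ C) (𝟙_ C)).inv =
      (𝟙 (𝟙_ C) ⊗ₘ kap z) ≫ (α_ (𝟙_ C) z (𝟙_ C)).inv ≫ (kap z ⊗ₘ 𝟙 (𝟙_ C)) := by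
    simp only [kap]
    coherence
  have eG : (α_ x y (𝟙_ C)).inv ≫ kap' (x ⊗ y) ≫ (α_ (𝟙_ C) x y).inv =
      (𝟙 x ⊗ₘ kap' y) ≫ (α_ x (𝟙_ C) y).inv ≫ (kap' x ⊗ₘ 𝟙 y) := by
    simp only [kap']
    coherence
  rw [eF, eG]

end EHAux

/-- The Eckmann–Hilton maps form a braiding making `(C, ⊗, I, σ)` a braided monoidal
category: they constitute a natural isomorphism satisfying both hexagon identities. -/
theorem EHsigma_braided {C : Type u} [Category.{v} C] [MonoidalCategory C]
    (S : InterchangeStruct C) :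
    ∃ B : BraidedCategory C, ∀ a b : C, (B.braiding a b).hom = EHsigma S a b := by
  refine ⟨{ braiding := fun a b => EHAux.sigmaIso S a b
            braiding_naturality_right := ?_
            braiding_naturality_left := ?_
            hexagon_forward := ?_
            hexagon_reverse := ?_ }, fun a b => rfl⟩
  · intro X Y Z f
    show X ◁ f ≫ EHsigma S X Z = EHsigma S X Y ≫ f ▷ X
    rw [← id_tensorHom, ← tensorHom_id]
    exact EHAux.sigma_natural S (𝟙 X) f
  · intro X Y f Z
    show f ▷ Z ≫ EHsigma S Y Z = EHsigma S X Z ≫ Z ◁ f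
    rw [← id_tensorHom, ← tensorHom_id]
    exact EHAux.sigma_natural S f (𝟙 Z)
  · intro X Y Z
    show (α_ X Y Z).hom ≫ EHsigma S X (Y ⊗ Z) ≫ (α_ Y Z X).hom =
      EHsigma S X Y ▷ Z ≫ (α_ Y X Z).hom ≫ Y ◁ EHsigma S X Z
    rw [← id_tensorHom, ← tensorHom_id]
    exact EHAux.hex_fwd S X Y Z
  · intro X Y Z
    show (α_ X Y Z).inv ≫ EHsigma S (X ⊗ Y) Z ≫ (α_ Z X Y).inv =
      X ◁ EHsigma S Y Z ≫ (α_ X Z Y).inv ≫ EHsigma S X Z ▷ Y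
    rw [← id_tensorHom, ← tensorHom_id]
    exact EHAux.hex_rev S X Y Z
end

section
/- Let F : C → D be a fully faithful and essentially surjective functor. Then the inverse image construction F* : D̃ → C̃ on clique categories is a well-defined functor: for each clique x in D indexed by J, the indexing set of triples (c, j, γ : x_j ≅ F c) is nonempty, the prescribed connecting morphisms exist uniquely and satisfy the clique laws, and F* sends clique morphisms to clique morphisms functorially. Moreover F* is an equivalence of categories. -/
open CategoryTheory Category

universe w v u

/-- A clique in a category `C`: a nonempty family of objects together with connecting
morphisms `x_{jk} : x_j ⟶ x_k` satisfying `x_{jj} = id` and `x_{jk} ≫ x_{kl} = x_{jl}`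
(hence each `x_{jk}` is an isomorphism). -/
structure Clique (C : Type u) [Category.{v} C] : Type (max u v (w + 1)) where
  ι : Type w
  [nonempty : Nonempty ι]
  obj : ι → C
  conn : ∀ j k : ι, obj j ⟶ obj k
  conn_self : ∀ j, conn j j = 𝟙 (obj j)
  conn_comp : ∀ j k l, conn j k ≫ conn k l = conn j l

attribute [instance] Clique.nonempty

/-- A morphism of cliques: a family of morphisms `f_{jk} : x_j ⟶ y_k` compatible with the
connecting morphisms. -/
@[ext]
structure CliqueHom {C : Type u} [Category.{v} C] (x y : Clique.{w} C) where
  app : ∀ (j : x.ι) (k : y.ι), x.obj j ⟶ y.obj k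
  compat : ∀ (j j' : x.ι) (k k' : y.ι), app j k ≫ y.conn k k' = x.conn j j' ≫ app j' k'

namespace CliqueHom

variable {C : Type u} [Category.{v} C] {x y : Clique.{w} C}

theorem conn_app (f : CliqueHom x y) (j j' : x.ι) (k : y.ι) :
    x.conn j j' ≫ f.app j' k = f.app j k := by
  have h := f.compat j j' k k
  rw [y.conn_self, comp_id] at h
  exact h.symm

theorem app_conn (f : CliqueHom x y) (j : x.ι) (k k' : y.ι) :
    f.app j k ≫ y.conn k k' = f.app j k' := by
  have h := f.compat j j k k'
  rw [x.conn_self, id_comp] at h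
  exact h

end CliqueHom

/-- The category of cliques in `C`. -/
noncomputable instance Clique.category (C : Type u) [Category.{v} C] :
    Category (Clique.{w} C) where
  Hom := CliqueHom
  id x := ⟨x.conn, fun j j' k k' => by rw [x.conn_comp, x.conn_comp]⟩
  comp {x y z} f g :=
    ⟨fun j l => f.app j (Classical.arbitrary y.ι) ≫ g.app (Classical.arbitrary y.ι) l,
      fun j j' l l' => by
        rw [assoc, g.app_conn, ← f.conn_app j j' (Classical.arbitrary y.ι), assoc]⟩
  id_comp f := by
    apply CliqueHom.ext
    funext j k
    exact f.conn_app _ _ _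
  comp_id f := by
    apply CliqueHom.ext
    funext j k
    exact f.app_conn _ _ _
  assoc {a b c d} f g h := by
    apply CliqueHom.ext
    funext j k
    exact Category.assoc (f.app j (Classical.arbitrary b.ι))
      (g.app (Classical.arbitrary b.ι) (Classical.arbitrary c.ι))
      (h.app (Classical.arbitrary c.ι) k)

@[simp]
theorem Clique.id_app {C : Type u} [Category.{v} C] (x : Clique.{w} C) (j k : x.ι) :
    CliqueHom.app (𝟙 x) j k = x.conn j k := rfl

theorem Clique.comp_app {C : Type u} [Category.{v} C] {x y z : Clique.{w} C}
    (f : x ⟶ y) (g : y ⟶ z) (j : x.ι) (l : z.ι) :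
    CliqueHom.app (f ≫ g) j l =
      CliqueHom.app f j (Classical.arbitrary y.ι) ≫
        CliqueHom.app g (Classical.arbitrary y.ι) l := rfl

/-- The singleton clique on an object. -/
def Clique.singleton {C : Type u} [Category.{v} C] (c : C) : Clique.{w} C where
  ι := PUnit
  obj _ := c
  conn _ _ := 𝟙 c
  conn_self _ := rfl
  conn_comp _ _ _ := comp_id _

/-- The canonical functor `C ⥤ C̃` sending an object to the singleton clique on it. -/
noncomputable def Clique.singletonFunctor (C : Type u) [Category.{v} C] :
    C ⥤ Clique.{w} C where
  obj c := Clique.singleton c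
  map {c c'} f := ⟨fun _ _ => f, fun _ _ _ _ => by simp [Clique.singleton]⟩
  map_id c := by
    apply CliqueHom.ext
    funext j k
    rfl
  map_comp f g := by
    apply CliqueHom.ext
    funext j k
    rfl

universe w₂ v₂ u₂

variable {C : Type u} [Category.{v} C] {D : Type u₂} [Category.{v₂} D]

/-- The indexing data for the inverse image clique `F*x`: triples `(c, j, γ)` with `c` an
object of `C`, `j` an index of the clique `x` in `D`, and `γ : x_j ≅ F c`. -/
structure TripleIdx (F : C ⥤ D) (x : Clique.{w₂} D) : Type (max u v₂ w₂) where
  c : C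
  j : x.ι
  γ : x.obj j ≅ F.obj c


namespace InvClique

set_option linter.unusedSectionVars false

theorem conn_comp_assoc {C : Type u} [Category.{v} C] (x : Clique.{w} C)
    (j k l : x.ι) {Z : C} (f : x.obj l ⟶ Z) :
    x.conn j k ≫ x.conn k l ≫ f = x.conn j l ≫ f := by
  rw [← assoc, x.conn_comp]

theorem app_conn_assoc {C : Type u} [Category.{v} C] {x y : Clique.{w} C}
    (f : CliqueHom x y) (j : x.ι) (k k' : y.ι) {Z : C} (g : y.obj k' ⟶ Z) :
    f.app j k ≫ y.conn k k' ≫ g = f.app j k' ≫ g := by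
  rw [← assoc, f.app_conn]

theorem conn_app_assoc {C : Type u} [Category.{v} C] {x y : Clique.{w} C}
    (f : CliqueHom x y) (j j' : x.ι) (k : y.ι) {Z : C} (g : y.obj k ⟶ Z) :
    x.conn j j' ≫ f.app j' k ≫ g = f.app j k ≫ g := by
  rw [← assoc, f.conn_app]

theorem app_app {C : Type u} [Category.{v} C] {x y z : Clique.{w} C}
    (f : CliqueHom x y) (g : CliqueHom y z) (j : x.ι) (k k' : y.ι) (l : z.ι) :
    f.app j k ≫ g.app k l = f.app j k' ≫ g.app k' l := by
  rw [← f.app_conn j k k', assoc, g.conn_app]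

section

variable {C : Type u} [Category.{v} C] {D : Type u₂} [Category.{v₂} D]
variable (F : C ⥤ D) [F.Full] [F.Faithful] [F.EssSurj]

/-- canonical triple over an index -/
noncomputable abbrev canTriple (x : Clique.{w₂} D) (j : x.ι) : TripleIdx F x :=
  ⟨F.objPreimage (x.obj j), j, (F.objObjPreimageIso (x.obj j)).symm⟩

@[simp] theorem canTriple_j (x : Clique.{w₂} D) (j : x.ι) : (canTriple F x j).j = j := rfl

instance (x : Clique.{w₂} D) : Nonempty (TripleIdx F x) :=
  ⟨canTriple F x (Classical.arbitrary x.ι)⟩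

/-- the inverse image clique -/
noncomputable abbrev obj (x : Clique.{w₂} D) : Clique.{max u v₂ w₂} C where
  ι := TripleIdx F x
  obj i := i.c
  conn i i' := F.preimage (i.γ.inv ≫ x.conn i.j i'.j ≫ i'.γ.hom)
  conn_self i := F.map_injective (by simp [x.conn_self])
  conn_comp i i' i'' := F.map_injective (by simp [conn_comp_assoc])

@[simp] theorem map_obj_conn (x : Clique.{w₂} D) (i i' : TripleIdx F x) :
    F.map ((obj F x).conn i i') = i.γ.inv ≫ x.conn i.j i'.j ≫ i'.γ.hom := by
  simp [obj]

theorem map_conn_canR (x : Clique.{w₂} D) (i : TripleIdx F x) (k : x.ι) :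
    F.map ((obj F x).conn i (canTriple F x k)) =
      i.γ.inv ≫ x.conn i.j k ≫ (canTriple F x k).γ.hom :=
  map_obj_conn F x i _

theorem map_conn_canL (x : Clique.{w₂} D) (j : x.ι) (i : TripleIdx F x) :
    F.map ((obj F x).conn (canTriple F x j) i) =
      (canTriple F x j).γ.inv ≫ x.conn j i.j ≫ i.γ.hom :=
  map_obj_conn F x _ i

theorem map_conn_canR_self (x : Clique.{w₂} D) (i : TripleIdx F x) :
    F.map ((obj F x).conn i (canTriple F x i.j)) =
      i.γ.inv ≫ (canTriple F x i.j).γ.hom := by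
  rw [map_conn_canR]; simp [x.conn_self]

theorem map_conn_canL_self (x : Clique.{w₂} D) (i : TripleIdx F x) :
    F.map ((obj F x).conn (canTriple F x i.j) i) =
      (canTriple F x i.j).γ.inv ≫ i.γ.hom := by
  rw [map_conn_canL]; simp [x.conn_self]

theorem map_conn_can_can (x : Clique.{w₂} D) (j k : x.ι) :
    F.map ((obj F x).conn (canTriple F x j) (canTriple F x k)) =
      (canTriple F x j).γ.inv ≫ x.conn j k ≫ (canTriple F x k).γ.hom :=
  map_obj_conn F x _ _

/-- the inverse image of a clique morphism -/
noncomputable def map {x y : Clique.{w₂} D} (φ : CliqueHom x y) :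
    CliqueHom (obj F x) (obj F y) where
  app i k := F.preimage (i.γ.inv ≫ φ.app i.j k.j ≫ k.γ.hom)
  compat i i' k k' := F.map_injective (by
    simp [obj, app_conn_assoc, conn_app_assoc])

@[simp] theorem map_map_app {x y : Clique.{w₂} D} (φ : CliqueHom x y)
    (i : TripleIdx F x) (k : TripleIdx F y) :
    F.map ((map F φ).app i k) = i.γ.inv ≫ φ.app i.j k.j ≫ k.γ.hom := by
  simp [map]

theorem map_injective_aux {x y : Clique.{w₂} D} {φ ψ : CliqueHom x y}
    (h : map F φ = map F ψ) : φ = ψ := by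
  apply CliqueHom.ext
  funext j k
  have h2 := congrArg (fun (f : CliqueHom (obj F x) (obj F y)) =>
    F.map (f.app (canTriple F x j) (canTriple F y k))) h
  simp only [map_map_app] at h2
  rw [cancel_epi, cancel_mono] at h2
  exact h2

theorem map_surjective_aux (x y : Clique.{w₂} D) (g : CliqueHom (obj F x) (obj F y)) :
    ∃ φ : CliqueHom x y, map F φ = g := by
  have key : ∀ (j j' : x.ι) (k k' : y.ι),
      ((canTriple F x j).γ.hom ≫ F.map (g.app (canTriple F x j) (canTriple F y k)) ≫
        (canTriple F y k).γ.inv) ≫ y.conn k k' =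
      x.conn j j' ≫ ((canTriple F x j').γ.hom ≫
        F.map (g.app (canTriple F x j') (canTriple F y k')) ≫
        (canTriple F y k').γ.inv) := by
    intro j j' k k'
    have hA : F.map (g.app (canTriple F x j) (canTriple F y k')) =
        F.map (g.app (canTriple F x j) (canTriple F y k)) ≫
          (canTriple F y k).γ.inv ≫ y.conn k k' ≫ (canTriple F y k').γ.hom := by
      rw [← map_conn_can_can, ← F.map_comp,
        CliqueHom.app_conn g (canTriple F x j) (canTriple F y k) (canTriple F y k')]
    have hB : F.map (g.app (canTriple F x j) (canTriple F y k')) =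
        ((canTriple F x j).γ.inv ≫ x.conn j j' ≫ (canTriple F x j').γ.hom) ≫
          F.map (g.app (canTriple F x j') (canTriple F y k')) := by
      rw [← map_conn_can_can, ← F.map_comp,
        CliqueHom.conn_app g (canTriple F x j) (canTriple F x j') (canTriple F y k')]
    calc ((canTriple F x j).γ.hom ≫ F.map (g.app (canTriple F x j) (canTriple F y k)) ≫
          (canTriple F y k).γ.inv) ≫ y.conn k k'
        = ((canTriple F x j).γ.hom ≫
            F.map (g.app (canTriple F x j) (canTriple F y k'))) ≫
            (canTriple F y k').γ.inv := by rw [hA]; simp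
      _ = x.conn j j' ≫ ((canTriple F x j').γ.hom ≫
            F.map (g.app (canTriple F x j') (canTriple F y k')) ≫
            (canTriple F y k').γ.inv) := by rw [hB]; simp
  refine ⟨⟨fun j k => (canTriple F x j).γ.hom ≫
      F.map (g.app (canTriple F x j) (canTriple F y k)) ≫ (canTriple F y k).γ.inv,
      fun j j' k k' => key j j' k k'⟩, ?_⟩
  apply CliqueHom.ext
  funext i k
  apply F.map_injective
  rw [map_map_app]
  calc i.γ.inv ≫ ((canTriple F x i.j).γ.hom ≫
        F.map (g.app (canTriple F x i.j) (canTriple F y k.j)) ≫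
        (canTriple F y k.j).γ.inv) ≫ k.γ.hom
      = (i.γ.inv ≫ (canTriple F x i.j).γ.hom) ≫
        F.map (g.app (canTriple F x i.j) (canTriple F y k.j)) ≫
        ((canTriple F y k.j).γ.inv ≫ k.γ.hom) := by simp
    _ = F.map ((obj F x).conn i (canTriple F x i.j)) ≫
        F.map (g.app (canTriple F x i.j) (canTriple F y k.j)) ≫
        F.map ((obj F y).conn (canTriple F y k.j) k) := by
          rw [map_conn_canR_self, map_conn_canL_self]
    _ = F.map (((obj F x).conn i (canTriple F x i.j) ≫
          g.app (canTriple F x i.j) (canTriple F y k.j)) ≫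
          (obj F y).conn (canTriple F y k.j) k) := by rw [F.map_comp, F.map_comp, assoc]
    _ = F.map (g.app i k) := by
        rw [CliqueHom.conn_app g i (canTriple F x i.j) (canTriple F y k.j),
          CliqueHom.app_conn g i (canTriple F y k.j) k]

/-- the inverse image functor `F*` -/
noncomputable abbrev functor : Clique.{w₂} D ⥤ Clique.{max u v₂ w₂} C where
  obj := obj F
  map := map F
  map_id x := by
    apply CliqueHom.ext
    funext i i'
    exact F.map_injective (by simp)
  map_comp {x y z} φ ψ := by
    apply CliqueHom.ext
    funext i k
    apply F.map_injective
    rw [Clique.comp_app, F.map_comp, map_map_app, map_map_app, map_map_app,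
      Clique.comp_app,
      app_app φ ψ i.j (Classical.arbitrary y.ι)
        ((Classical.arbitrary (obj F y).ι : TripleIdx F y)).j k.j]
    simp

theorem functor_map {x y : Clique.{w₂} D} (φ : x ⟶ y) :
    (functor F).map φ = map F φ := rfl

@[simp] theorem map_functor_obj_conn (x : Clique.{w₂} D) (i i' : ((functor F).obj x).ι) :
    F.map (((functor F).obj x).conn i i') =
      (TripleIdx.γ i).inv ≫ x.conn (TripleIdx.j i) (TripleIdx.j i') ≫ (TripleIdx.γ i').hom :=
  map_obj_conn F x i i'

instance functor_faithful : (functor F : Clique.{w₂} D ⥤ Clique.{max u v₂ w₂} C).Faithful where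
  map_injective {x y φ ψ} h := map_injective_aux F h

instance functor_full : (functor F : Clique.{w₂} D ⥤ Clique.{max u v₂ w₂} C).Full where
  map_surjective {x y} g := map_surjective_aux F x y g

@[simp] theorem singleton_obj {E : Type u} [Category.{v} E] (c : E)
    (a : (Clique.singleton.{w} c).ι) : (Clique.singleton.{w} c).obj a = c := rfl

@[simp] theorem singleton_conn {E : Type u} [Category.{v} E] (c : E)
    (a b : (Clique.singleton.{w} c).ι) : (Clique.singleton.{w} c).conn a b = 𝟙 c := rfl

noncomputable instance functor_essSurj : (functor F : Clique.{w₂} D ⥤ Clique.{max u v₂ w₂} C).EssSurj where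
  mem_essImage z := by
    set j₀ := Classical.arbitrary z.ι with hj₀
    set s : Clique.{w₂} D := Clique.singleton.{w₂} (F.obj (z.obj j₀)) with hs
    have hconn : ∀ a b : s.ι, s.conn a b = 𝟙 (F.obj (z.obj j₀)) := fun a b => rfl
    refine ⟨s, ⟨?_⟩⟩
    refine
      { hom := ⟨fun i k => F.preimage i.γ.inv ≫ z.conn j₀ k,
          fun i i' k k' => F.map_injective ?_⟩
        inv := ⟨fun k i => z.conn k j₀ ≫ F.preimage i.γ.hom,
          fun k k' i i' => F.map_injective ?_⟩
        hom_inv_id := ?_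
        inv_hom_id := ?_ }
    · show F.map ((F.preimage i.γ.inv ≫ z.conn j₀ k) ≫ z.conn k k') =
        F.map ((obj F s).conn i i' ≫ F.preimage i'.γ.inv ≫ z.conn j₀ k')
      simp only [F.map_comp, F.map_preimage, map_obj_conn, hconn, assoc,
        Iso.hom_inv_id_assoc, id_comp]
      rw [← F.map_comp, z.conn_comp]
      erw [F.map_preimage, F.map_preimage, id_comp, Iso.hom_inv_id_assoc]
      rfl
    · show F.map ((z.conn k j₀ ≫ F.preimage i.γ.hom) ≫
          F.preimage (i.γ.inv ≫ s.conn i.j i'.j ≫ i'.γ.hom)) =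
        F.map (z.conn k k' ≫ z.conn k' j₀ ≫ F.preimage i'.γ.hom)
      simp only [F.map_comp, F.map_preimage, hconn, assoc, Iso.hom_inv_id_assoc,
        id_comp]
      rw [← assoc (F.map (z.conn k k')), ← F.map_comp, z.conn_comp]
      erw [F.map_preimage, F.map_preimage, id_comp, Iso.hom_inv_id_assoc]
    · apply CliqueHom.ext
      funext i i'
      apply F.map_injective
      show F.map ((F.preimage i.γ.inv ≫ z.conn j₀ (Classical.arbitrary z.ι)) ≫
          z.conn (Classical.arbitrary z.ι) j₀ ≫ F.preimage i'.γ.hom) =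
        F.map ((obj F s).conn i i')
      simp only [F.map_comp, F.map_preimage, map_obj_conn, hconn, assoc, id_comp]
      rw [← assoc (F.map (z.conn j₀ _)), ← F.map_comp, z.conn_comp, z.conn_self,
        F.map_id, id_comp]
      erw [F.map_preimage, F.map_preimage, id_comp]
      rfl
    · apply CliqueHom.ext
      funext k k'
      apply F.map_injective
      set i₀ : TripleIdx F s := Classical.arbitrary (obj F s).ι with hi₀
      show F.map ((z.conn k j₀ ≫ F.preimage i₀.γ.hom) ≫
          F.preimage i₀.γ.inv ≫ z.conn j₀ k') = F.map (z.conn k k')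
      simp only [F.map_comp, F.map_preimage, assoc, Iso.hom_inv_id_assoc]
      erw [F.map_preimage, F.map_preimage, Iso.hom_inv_id_assoc, ← F.map_comp, z.conn_comp]

instance functor_isEquivalence : (functor F : Clique.{w₂} D ⥤ Clique.{max u v₂ w₂} C).IsEquivalence where

end

end InvClique

/-- For a fully faithful and essentially surjective functor `F : C ⥤ D`, the inverse image
construction `F* : D̃ → C̃` is a well-defined functor: for each clique `x` in `D` the
indexing set of triples `(c, j, γ : x_j ≅ F c)` is nonempty, the prescribed connecting
morphisms (the unique `w` with `F(w) ∘ γ₀ = γ₁ ∘ x_{j₀j₁}`) exist uniquely and satisfy the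
clique laws, and `F*` sends clique morphisms to clique morphisms functorially (the
component of `F*φ` at `((c,j,γ), (c',k,γ'))` being the unique `w : c ⟶ c'` with
`F(w) ∘ γ = γ' ∘ φ_{jk}`).  Moreover `F*` is an equivalence of categories. -/
theorem inverse_image_clique_functor (F : C ⥤ D) (hFull : F.Full)
    (hFaithful : F.Faithful) (hEssSurj : F.EssSurj) :
    -- the indexing set of triples is nonempty
    (∀ x : Clique.{w₂} D, Nonempty (TripleIdx F x)) ∧
    -- the prescribed connecting morphisms exist uniquely
    (∀ (x : Clique.{w₂} D) (a b : TripleIdx F x),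
      ∃! wmor : a.c ⟶ b.c, a.γ.hom ≫ F.map wmor = x.conn a.j b.j ≫ b.γ.hom) ∧
    -- `F*` is a functor whose value at `x` is the clique of triples with the prescribed
    -- objects and connecting morphisms, acting on clique morphisms as prescribed, and it
    -- is an equivalence of categories
    ∃ (Fstar : Clique.{w₂} D ⥤ Clique.{max u v₂ w₂} C)
      (hι : ∀ x : Clique.{w₂} D, (Fstar.obj x).ι = TripleIdx F x)
      (hobj : ∀ (x : Clique.{w₂} D) (i : (Fstar.obj x).ι),
        (Fstar.obj x).obj i = (cast (hι x) i).c),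
      Fstar.IsEquivalence ∧
      (∀ (x : Clique.{w₂} D) (i i' : (Fstar.obj x).ι),
        (cast (hι x) i).γ.hom ≫
            F.map (eqToHom (hobj x i).symm ≫ (Fstar.obj x).conn i i' ≫ eqToHom (hobj x i')) =
          x.conn (cast (hι x) i).j (cast (hι x) i').j ≫ (cast (hι x) i').γ.hom) ∧
      (∀ (x y : Clique.{w₂} D) (φ : x ⟶ y) (i : (Fstar.obj x).ι) (i' : (Fstar.obj y).ι),
        (cast (hι x) i).γ.hom ≫
            F.map (eqToHom (hobj x i).symm ≫ CliqueHom.app (Fstar.map φ) i i' ≫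
              eqToHom (hobj y i')) =
          CliqueHom.app φ (cast (hι x) i).j (cast (hι y) i').j ≫ (cast (hι y) i').γ.hom) := by
  haveI := hFull; haveI := hFaithful; haveI := hEssSurj
  refine ⟨fun x => inferInstance, ?_, ?_⟩
  · intro x a b
    refine ⟨F.preimage (a.γ.inv ≫ x.conn a.j b.j ≫ b.γ.hom), by simp, ?_⟩
    intro w hw
    apply F.map_injective
    rw [F.map_preimage, ← hw]
    simp
  · refine ⟨InvClique.functor F, fun x => rfl, fun x i => rfl, inferInstance, ?_, ?_⟩
    · intro x i i'
      simp
    · intro x y φ i i'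
      rw [InvClique.functor_map]
      simp
end

section
/- Let x, y : Fin n → (0,1) × (0,1) be injective maps such that (x i).2 = (y i).2 for every i, and such that for all i, j with (x i).2 = (x j).2 one has (x i).1 < (x j).1 if and only if (y i).1 < (y j).1. Then for every t ∈ [0,1] the map i ↦ (1−t)·(x i) + t·(y i) is injective; consequently the straight-line path t ↦ ((1−t)·x + t·y) is a slide path from x to y in the configuration space. -/
open Set

/-- The space of configurations of `n` (labelled) points in the open unit square: injective
maps `Fin n → (0,1) × (0,1)`. -/
def Conf (n : ℕ) : Type :=
  { x : Fin n → ℝ × ℝ //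
    Function.Injective x ∧ ∀ i, x i ∈ Ioo (0 : ℝ) 1 ×ˢ Ioo (0 : ℝ) 1 }

/-- The configuration space carries the subspace topology from the product topology. -/
instance (n : ℕ) : TopologicalSpace (Conf n) :=
  inferInstanceAs (TopologicalSpace
    { x : Fin n → ℝ × ℝ //
      Function.Injective x ∧ ∀ i, x i ∈ Ioo (0 : ℝ) 1 ×ˢ Ioo (0 : ℝ) 1 })

/-- A slide path: a path in the configuration space along which the second coordinate
(the height) of each point is constant. -/
def IsSlidePath {n : ℕ} {x y : Conf n} (γ : Path x y) : Prop :=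
  ∀ (t : unitInterval) (i : Fin n), ((γ t).1 i).2 = (x.1 i).2

/-- Two configurations are slide-equivalent if there is a slide path from one to the
other. -/
def SlideEquiv {n : ℕ} (x y : Conf n) : Prop :=
  ∃ γ : Path x y, IsSlidePath γ

/-- If two configurations have the same heights and the same horizontal order of points at
each common height, then every convex combination of them is injective; consequently the
straight-line path `t ↦ (1−t)·x + t·y` is a slide path from `x` to `y` in the
configuration space. -/
theorem straight_line_slide_path {n : ℕ} (x y : Conf n)
    (hheight : ∀ i, (x.1 i).2 = (y.1 i).2)
    (horder : ∀ i j, (x.1 i).2 = (x.1 j).2 →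
      ((x.1 i).1 < (x.1 j).1 ↔ (y.1 i).1 < (y.1 j).1)) :
    (∀ t ∈ Icc (0 : ℝ) 1,
      Function.Injective fun i => (1 - t) • x.1 i + t • y.1 i) ∧
    ∃ γ : Path x y, IsSlidePath γ ∧
      ∀ (t : unitInterval) (i : Fin n),
        (γ t).1 i = (1 - (t : ℝ)) • x.1 i + (t : ℝ) • y.1 i := by
  have key : ∀ t : ℝ, t ∈ Icc (0:ℝ) 1 →
      Function.Injective fun i => (1 - t) • x.1 i + t • y.1 i := by
    intro t ht i j h
    have h1 := congrArg Prod.fst h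
    have h2 := congrArg Prod.snd h
    simp only [Prod.fst_add, Prod.snd_add, Prod.smul_fst, Prod.smul_snd,
      smul_eq_mul] at h1 h2
    rw [← hheight i, ← hheight j] at h2
    have hsec : (x.1 i).2 = (x.1 j).2 := by linear_combination h2
    by_contra hne
    have hx : (x.1 i).1 ≠ (x.1 j).1 := by
      intro he
      exact hne (x.2.1 (Prod.ext_iff.mpr ⟨he, hsec⟩))
    rcases lt_trichotomy ((x.1 i).1) ((x.1 j).1) with hlt | heq | hgt
    · have hy := (horder i j hsec).mp hlt
      rcases eq_or_lt_of_le ht.1 with h0 | h0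
      · rw [← h0] at h1; simp at h1; linarith
      · have a1 := mul_lt_mul_of_pos_left hy h0
        have a2 := mul_le_mul_of_nonneg_left hlt.le (by linarith [ht.2] : (0:ℝ) ≤ 1 - t)
        linarith
    · exact hx heq
    · have hy := (horder j i hsec.symm).mp hgt
      rcases eq_or_lt_of_le ht.1 with h0 | h0
      · rw [← h0] at h1; simp at h1; linarith
      · have a1 := mul_lt_mul_of_pos_left hy h0
        have a2 := mul_le_mul_of_nonneg_left hgt.le (by linarith [ht.2] : (0:ℝ) ≤ 1 - t)
        linarith
  have hmem : ∀ t : ℝ, t ∈ Icc (0:ℝ) 1 → ∀ i,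
      ((1 - t) • x.1 i + t • y.1 i) ∈ Ioo (0:ℝ) 1 ×ˢ Ioo (0:ℝ) 1 := by
    intro t ht i
    constructor
    · have := (convex_Ioo (0:ℝ) 1) (x.2.2 i).1 (y.2.2 i).1
        (by linarith [ht.2] : (0:ℝ) ≤ 1 - t) ht.1 (by ring)
      simpa using this
    · have := (convex_Ioo (0:ℝ) 1) (x.2.2 i).2 (y.2.2 i).2
        (by linarith [ht.2] : (0:ℝ) ≤ 1 - t) ht.1 (by ring)
      simpa using this
  refine ⟨fun t ht => key t ht, ?_⟩
  refine ⟨⟨⟨fun t => ⟨fun i => (1 - (t:ℝ)) • x.1 i + (t:ℝ) • y.1 i,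
      key t ⟨t.2.1, t.2.2⟩, fun i => hmem t ⟨t.2.1, t.2.2⟩ i⟩, ?_⟩, ?_, ?_⟩,
    ?_, fun t i => rfl⟩
  · apply Continuous.subtype_mk
    apply continuous_pi
    intro i
    exact (((continuous_const.sub continuous_subtype_val).smul continuous_const).add
      (continuous_subtype_val.smul continuous_const))
  · apply Subtype.ext; funext i; norm_num
  · apply Subtype.ext; funext i; norm_num
  · intro t i
    show ((1 - (t:ℝ)) • x.1 i + (t:ℝ) • y.1 i).2 = (x.1 i).2
    simp only [Prod.snd_add, Prod.smul_snd, smul_eq_mul, ← hheight i]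
    ring
end

section
/- Let γ be a slide path from a configuration x to a configuration y (of n points in the open unit square). Then (y i).2 = (x i).2 for every i, and for all indices i, j with (x i).2 = (x j).2 one has (x i).1 < (x j).1 if and only if (y i).1 < (y j).1. That is, a slide path preserves the vertical coordinate of every point and the horizontal order of points at each common height. -/
open Set

/-- A slide path preserves the vertical coordinate of every point and the horizontal order
of points at each common height. -/
theorem slide_path_preserves_heights_and_order {n : ℕ} {x y : Conf n}
    (γ : Path x y) (hγ : IsSlidePath γ) :
    (∀ i, (y.1 i).2 = (x.1 i).2) ∧
      ∀ i j, (x.1 i).2 = (x.1 j).2 →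
        ((x.1 i).1 < (x.1 j).1 ↔ (y.1 i).1 < (y.1 j).1) := by
  have hy : ∀ i, (y.1 i).2 = (x.1 i).2 := fun i => by
    have := hγ 1 i
    rwa [γ.target] at this
  refine ⟨hy, fun i j hij => ?_⟩
  by_cases hji : i = j
  · subst hji; simp
  -- the continuous difference function
  set f : unitInterval → ℝ := fun t => ((γ t).1 j).1 - ((γ t).1 i).1 with hf
  have hcont : Continuous f := by
    have h1 : Continuous fun t : unitInterval => (γ t).1 :=
      continuous_subtype_val.comp γ.continuous
    exact (continuous_fst.comp ((continuous_apply j).comp h1)).sub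
      (continuous_fst.comp ((continuous_apply i).comp h1))
  have hne : ∀ t, f t ≠ 0 := by
    intro t ht
    apply hji
    apply (γ t).2.1
    have h2 : ((γ t).1 i).2 = ((γ t).1 j).2 := by
      rw [hγ t i, hγ t j, hij]
    have h1 : ((γ t).1 i).1 = ((γ t).1 j).1 := by
      have := sub_eq_zero.mp ht; linarith
    exact Prod.ext h1 h2
  have hkey : 0 < f 0 ↔ 0 < f 1 := by
    constructor
    · intro h0
      by_contra h1
      push_neg at h1
      have : (0 : ℝ) ∈ Set.range f := intermediate_value_univ 1 0 hcont ⟨h1, le_of_lt h0⟩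
      obtain ⟨t, ht⟩ := this
      exact hne t ht
    · intro h1
      by_contra h0
      push_neg at h0
      have : (0 : ℝ) ∈ Set.range f := intermediate_value_univ 0 1 hcont ⟨h0, le_of_lt h1⟩
      obtain ⟨t, ht⟩ := this
      exact hne t ht
  have e0 : f 0 = (x.1 j).1 - (x.1 i).1 := by simp [hf, γ.source]
  have e1 : f 1 = (y.1 j).1 - (y.1 i).1 := by simp [hf, γ.target]
  rw [e0, e1] at hkey
  constructor
  · intro h; have := hkey.mp (by linarith); linarith
  · intro h; have := hkey.mpr (by linarith); linarith
end

section
/- Two configurations x, y of n points in the open unit square are slide-equivalent if and only if (x i).2 = (y i).2 for every index i and, for all i, j with (x i).2 = (x j).2, (x i).1 < (x j).1 if and only if (y i).1 < (y j).1. -/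
open Set

lemma combo_lt {a b c d t : ℝ} (ht : t ∈ Icc (0:ℝ) 1) (h1 : a < c) (h2 : b < d) :
    (1 - t) * a + t * b < (1 - t) * c + t * d := by
  rcases eq_or_lt_of_le ht.1 with h | h
  · rw [← h]; ring_nf; linarith
  · nlinarith [mul_pos h (sub_pos.2 h2), mul_nonneg (sub_nonneg.2 ht.2) (sub_pos.2 h1).le]

lemma combo_mem {a b t : ℝ} (ht : t ∈ Icc (0:ℝ) 1) (ha : a ∈ Ioo (0:ℝ) 1)
    (hb : b ∈ Ioo (0:ℝ) 1) : (1 - t) * a + t * b ∈ Ioo (0:ℝ) 1 := by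
  constructor
  · have := combo_lt ht ha.1 hb.1; linarith
  · have := combo_lt ht ha.2 hb.2; linarith

lemma sign_const {f : ℝ → ℝ} (hf : Continuous f)
    (hne : ∀ t ∈ Icc (0:ℝ) 1, f t ≠ 0) : (0 < f 0 ↔ 0 < f 1) := by
  constructor <;> intro h <;> by_contra h'
  · have h1 : f 1 < 0 := lt_of_le_of_ne (not_lt.1 h') (hne 1 ⟨by norm_num, le_refl 1⟩)
    obtain ⟨t, ht, ht0⟩ := intermediate_value_Icc' zero_le_one hf.continuousOn
      (⟨h1.le, h.le⟩ : (0:ℝ) ∈ Icc (f 1) (f 0))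
    exact hne t ht ht0
  · have h0 : f 0 < 0 := lt_of_le_of_ne (not_lt.1 h') (hne 0 ⟨le_refl 0, by norm_num⟩)
    obtain ⟨t, ht, ht0⟩ := intermediate_value_Icc zero_le_one hf.continuousOn
      (⟨h0.le, h.le⟩ : (0:ℝ) ∈ Icc (f 0) (f 1))
    exact hne t ht ht0

/-- Two configurations of `n` points in the open unit square are slide-equivalent if and
only if corresponding points have the same heights and points at each common height appear
in the same horizontal order. -/
theorem slideEquiv_iff {n : ℕ} (x y : Conf n) :
    SlideEquiv x y ↔
      (∀ i, (x.1 i).2 = (y.1 i).2) ∧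
        ∀ i j, (x.1 i).2 = (x.1 j).2 →
          ((x.1 i).1 < (x.1 j).1 ↔ (y.1 i).1 < (y.1 j).1) := by
  constructor
  · rintro ⟨γ, hγ⟩
    have hy2 : ∀ i, (x.1 i).2 = (y.1 i).2 := by
      intro i
      have h := hγ 1 i
      rw [γ.target] at h
      exact h.symm
    refine ⟨hy2, ?_⟩
    intro i j hij
    by_cases hij' : i = j
    · subst hij'; simp
    set f : ℝ → ℝ := fun t => ((γ.extend t).1 j).1 - ((γ.extend t).1 i).1 with hf_def
    have hcont : ∀ k : Fin n, Continuous fun t : ℝ => ((γ.extend t).1 k).1 :=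
      fun k => continuous_fst.comp ((continuous_apply k).comp
        (continuous_subtype_val.comp γ.continuous_extend))
    have hf : Continuous f := (hcont j).sub (hcont i)
    have hne : ∀ t ∈ Icc (0:ℝ) 1, f t ≠ 0 := by
      intro t ht h0
      have hext : γ.extend t = γ ⟨t, ht⟩ := γ.extend_apply ht
      have h2 : ((γ ⟨t, ht⟩).1 i).2 = ((γ ⟨t, ht⟩).1 j).2 := by
        rw [hγ ⟨t, ht⟩ i, hγ ⟨t, ht⟩ j, hij]
      have h1 : ((γ ⟨t, ht⟩).1 i).1 = ((γ ⟨t, ht⟩).1 j).1 := by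
        rw [hf_def] at h0; simp only [hext] at h0; linarith [sub_eq_zero.1 h0]
      exact hij' ((γ ⟨t, ht⟩).2.1 (Prod.ext h1 h2))
    have key := sign_const hf hne
    have e0 : f 0 = (x.1 j).1 - (x.1 i).1 := by simp [hf_def]
    have e1 : f 1 = (y.1 j).1 - (y.1 i).1 := by simp [hf_def]
    rw [e0, e1] at key
    constructor <;> intro h
    · linarith [key.1 (by linarith)]
    · linarith [key.2 (by linarith)]
  · rintro ⟨h2, hord⟩
    have hinj : ∀ t : ℝ, t ∈ Icc (0:ℝ) 1 → Function.Injective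
        (fun i : Fin n => ((1 - t) * (x.1 i).1 + t * (y.1 i).1, (x.1 i).2)) := by
      intro t ht i j h
      simp only [Prod.mk.injEq] at h
      obtain ⟨hfst, hsnd⟩ := h
      rcases lt_trichotomy (x.1 i).1 (x.1 j).1 with hlt | heq | hgt
      · exact absurd hfst (ne_of_lt (combo_lt ht hlt ((hord i j hsnd).1 hlt)))
      · exact x.2.1 (Prod.ext heq hsnd)
      · exact absurd hfst.symm (ne_of_lt (combo_lt ht hgt ((hord j i hsnd.symm).1 hgt)))
    have hmem : ∀ t : ℝ, t ∈ Icc (0:ℝ) 1 → ∀ i : Fin n,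
        ((1 - t) * (x.1 i).1 + t * (y.1 i).1, (x.1 i).2) ∈
          Ioo (0:ℝ) 1 ×ˢ Ioo (0:ℝ) 1 := by
      intro t ht i
      exact ⟨combo_mem ht ⟨(x.2.2 i).1.1, (x.2.2 i).1.2⟩ ⟨(y.2.2 i).1.1, (y.2.2 i).1.2⟩,
        (x.2.2 i).2⟩
    refine ⟨⟨⟨fun t => ⟨fun i => ((1 - t.1) * (x.1 i).1 + t.1 * (y.1 i).1, (x.1 i).2),
        hinj t.1 t.2, hmem t.1 t.2⟩, ?_⟩, ?_, ?_⟩, fun t i => rfl⟩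
    · apply Continuous.subtype_mk
      apply continuous_pi
      intro i
      exact (((continuous_const.sub continuous_subtype_val).mul continuous_const).add
        (continuous_subtype_val.mul continuous_const)).prodMk continuous_const
    · apply Subtype.ext
      funext i
      show ((1 - (0:ℝ)) * (x.1 i).1 + (0:ℝ) * (y.1 i).1, (x.1 i).2) = x.1 i
      rw [show (1 - (0:ℝ)) * (x.1 i).1 + (0:ℝ) * (y.1 i).1 = (x.1 i).1 by ring]
    · apply Subtype.ext
      funext i
      show ((1 - (1:ℝ)) * (x.1 i).1 + (1:ℝ) * (y.1 i).1, (x.1 i).2) = y.1 i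
      rw [show (1 - (1:ℝ)) * (x.1 i).1 + (1:ℝ) * (y.1 i).1 = (y.1 i).1 by ring, h2 i]
end

section
/- Any two slide paths γ₀, γ₁ from a configuration x to a configuration y (of n points in the open unit square) are homotopic relative to their endpoints as paths in the configuration space Conf_n; indeed the straight-line homotopy H(s,t) = (1−s)·γ₀(t) + s·γ₁(t) takes values in Conf_n and is a homotopy rel endpoints. Consequently, between two slide-equivalent configurations there is exactly one homotopy class of slide paths (the slide map is unique). -/
open Set

/-- Along a slide path, two points at the same height preserve their horizontal order. -/
lemma slide_order {n : ℕ} {x y : Conf n} (γ : Path x y) (h : IsSlidePath γ)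
    {i j : Fin n} (hij : i ≠ j) (hh : (x.1 i).2 = (x.1 j).2) (t : unitInterval)
    (hx : (x.1 j).1 < (x.1 i).1) : ((γ t).1 j).1 < ((γ t).1 i).1 := by
  haveI : PreconnectedSpace unitInterval := Subtype.preconnectedSpace isPreconnected_Icc
  set f : unitInterval → ℝ := fun t => ((γ t).1 i).1 - ((γ t).1 j).1 with hf
  have hcγ : Continuous fun t : unitInterval => (γ t).1 :=
    continuous_subtype_val.comp γ.continuous
  have hcf : Continuous f :=
    (continuous_fst.comp ((continuous_apply i).comp hcγ)).sub
      (continuous_fst.comp ((continuous_apply j).comp hcγ))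
  have hne : ∀ s : unitInterval, f s ≠ 0 := by
    intro s hzero
    apply hij
    apply (γ s).2.1
    have h2 : ((γ s).1 i).2 = ((γ s).1 j).2 := by rw [h s i, h s j, hh]
    have h1 : ((γ s).1 i).1 = ((γ s).1 j).1 := by
      have := sub_eq_zero.mp hzero; exact this
    exact Prod.ext h1 h2
  have hf0 : 0 < f 0 := by
    have : γ 0 = x := γ.source
    simp only [hf, this]; linarith
  by_contra hle
  push_neg at hle
  have hlt : f t < 0 := lt_of_le_of_ne (by simpa [hf] using hle) (hne t)
  obtain ⟨s, hs⟩ := intermediate_value_univ₂ hcf continuous_const hlt.le hf0.le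
  exact hne s hs

/-- Any two slide paths between the same configurations are homotopic rel endpoints: the
straight-line homotopy `H(s,t) = (1−s)·γ₀(t) + s·γ₁(t)` takes values in the configuration
space and is a homotopy rel endpoints.  Consequently, between two slide-equivalent
configurations there is exactly one homotopy class of slide paths. -/
theorem slide_paths_homotopic {n : ℕ} {x y : Conf n} (γ₀ γ₁ : Path x y)
    (h₀ : IsSlidePath γ₀) (h₁ : IsSlidePath γ₁) :
    (∃ H : Path.Homotopy γ₀ γ₁,
      ∀ (s t : unitInterval) (i : Fin n),
        (H (s, t)).1 i = (1 - (s : ℝ)) • (γ₀ t).1 i + (s : ℝ) • (γ₁ t).1 i) ∧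
    γ₀.Homotopic γ₁ := by
  -- heights stay constant along the combination
  have hmem : ∀ (s t : unitInterval),
      Function.Injective (fun i => (1 - (s : ℝ)) • (γ₀ t).1 i + (s : ℝ) • (γ₁ t).1 i) ∧
      ∀ i, (1 - (s : ℝ)) • (γ₀ t).1 i + (s : ℝ) • (γ₁ t).1 i ∈
        Ioo (0 : ℝ) 1 ×ˢ Ioo (0 : ℝ) 1 := by
    intro s t
    have hs0 : (0 : ℝ) ≤ s := s.2.1
    have hs1 : (s : ℝ) ≤ 1 := s.2.2
    constructor
    · intro i j hEq
      by_contra hij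
      -- second coordinates
      have snd_i₀ := h₀ t i
      have snd_j₀ := h₀ t j
      have snd_i₁ := h₁ t i
      have snd_j₁ := h₁ t j
      have hsnd : ((1 - (s : ℝ)) • (γ₀ t).1 i + (s : ℝ) • (γ₁ t).1 i).2 = (x.1 i).2 := by
        simp [Prod.snd_add, Prod.smul_snd, snd_i₀, snd_i₁]; ring
      have hsnd' : ((1 - (s : ℝ)) • (γ₀ t).1 j + (s : ℝ) • (γ₁ t).1 j).2 = (x.1 j).2 := by
        simp [Prod.snd_add, Prod.smul_snd, snd_j₀, snd_j₁]; ring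
      have hh : (x.1 i).2 = (x.1 j).2 := by
        rw [← hsnd, ← hsnd']; exact congrArg Prod.snd hEq
      have hfst : ((1 - (s : ℝ)) • (γ₀ t).1 i + (s : ℝ) • (γ₁ t).1 i).1 =
          ((1 - (s : ℝ)) • (γ₀ t).1 j + (s : ℝ) • (γ₁ t).1 j).1 := congrArg Prod.fst hEq
      simp only [Prod.fst_add, Prod.smul_fst, smul_eq_mul] at hfst
      have hxne : (x.1 i).1 ≠ (x.1 j).1 := by
        intro hfeq
        exact hij (x.2.1 (Prod.ext hfeq hh))
      rcases lt_or_gt_of_ne hxne with hlt | hgt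
      · have o₀ := slide_order γ₀ h₀ (Ne.symm hij) hh.symm t hlt
        have o₁ := slide_order γ₁ h₁ (Ne.symm hij) hh.symm t hlt
        rcases eq_or_lt_of_le hs0 with hs | hs
        · rw [← hs] at hfst; simp at hfst; linarith
        · nlinarith [mul_pos hs (sub_pos.2 o₁),
            mul_nonneg (by linarith : (0:ℝ) ≤ 1 - s) (sub_pos.2 o₀).le]
      · have o₀ := slide_order γ₀ h₀ hij hh t hgt
        have o₁ := slide_order γ₁ h₁ hij hh t hgt
        rcases eq_or_lt_of_le hs0 with hs | hs
        · rw [← hs] at hfst; simp at hfst; linarith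
        · nlinarith [mul_pos hs (sub_pos.2 o₁),
            mul_nonneg (by linarith : (0:ℝ) ≤ 1 - s) (sub_pos.2 o₀).le]
    · intro i
      exact ((convex_Ioo (0:ℝ) 1).prod (convex_Ioo (0:ℝ) 1)) ((γ₀ t).2.2 i) ((γ₁ t).2.2 i)
        (by linarith : (0:ℝ) ≤ 1 - s) s.2.1 (by ring)
  set F : unitInterval × unitInterval → Conf n := fun p =>
    ⟨fun i => (1 - (p.1 : ℝ)) • (γ₀ p.2).1 i + (p.1 : ℝ) • (γ₁ p.2).1 i,
      hmem p.1 p.2⟩ with hF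
  have hc0 : Continuous fun p : unitInterval × unitInterval => (γ₀ p.2).1 :=
    continuous_subtype_val.comp (γ₀.continuous.comp continuous_snd)
  have hc1 : Continuous fun p : unitInterval × unitInterval => (γ₁ p.2).1 :=
    continuous_subtype_val.comp (γ₁.continuous.comp continuous_snd)
  have hcs : Continuous fun p : unitInterval × unitInterval => (p.1 : ℝ) :=
    continuous_subtype_val.comp continuous_fst
  have hFc : Continuous F := by
    apply Continuous.subtype_mk
    apply continuous_pi
    intro i
    exact ((continuous_const.sub hcs).smul ((continuous_apply i).comp hc0)).add
      (hcs.smul ((continuous_apply i).comp hc1))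
  have hx0 : γ₀ 0 = x := γ₀.source
  have hx1 : γ₁ 0 = x := γ₁.source
  have hy0 : γ₀ 1 = y := γ₀.target
  have hy1 : γ₁ 1 = y := γ₁.target
  have main : ∃ H : Path.Homotopy γ₀ γ₁,
      ∀ (s t : unitInterval) (i : Fin n),
        (H (s, t)).1 i = (1 - (s : ℝ)) • (γ₀ t).1 i + (s : ℝ) • (γ₁ t).1 i :=
    ⟨{ toFun := F
       continuous_toFun := hFc
       map_zero_left := by
         intro t
         apply Subtype.ext
         funext i
         show (1 - ((0 : unitInterval) : ℝ)) • (γ₀ t).1 i + ((0 : unitInterval) : ℝ) • (γ₁ t).1 i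
           = (γ₀ t).1 i
         simp
       map_one_left := by
         intro t
         apply Subtype.ext
         funext i
         show (1 - ((1 : unitInterval) : ℝ)) • (γ₀ t).1 i + ((1 : unitInterval) : ℝ) • (γ₁ t).1 i
           = (γ₁ t).1 i
         simp
       prop' := by
         intro s t ht
         simp only [Set.mem_insert_iff, Set.mem_singleton_iff] at ht
         rcases ht with rfl | rfl
         · apply Subtype.ext
           funext i
           show (1 - (s : ℝ)) • (γ₀ 0).1 i + (s : ℝ) • (γ₁ 0).1 i = (γ₀ 0).1 i
           rw [hx0, hx1, ← add_smul]
           simp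
         · apply Subtype.ext
           funext i
           show (1 - (s : ℝ)) • (γ₀ 1).1 i + (s : ℝ) • (γ₁ 1).1 i = (γ₀ 1).1 i
           rw [hy0, hy1, ← add_smul]
           simp }, fun s t i => rfl⟩
  exact ⟨main, main.elim fun H _ => ⟨H⟩⟩
end

section
/- Horizontal stacking of configurations is strictly associative and unital up to slide equivalence: for configurations x, y, z of m, n, p points in the open unit square, the configurations (x | y) | z and x | (y | z) (of m+n+p points, identified along the canonical bijection Fin((m+n)+p) ≃ Fin(m+(n+p))) are slide-equivalent; moreover x | ∅ and ∅ | x (with ∅ the empty configuration, under the canonical identifications of index sets) are each slide-equivalent to x. -/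
open Set

/-- Reindexing a configuration along a bijection of index sets. -/
def Conf.reindex {m n : ℕ} (e : Fin m ≃ Fin n) (x : Conf m) : Conf n :=
  ⟨x.1 ∘ e.symm, x.2.1.comp e.symm.injective, fun i => x.2.2 (e.symm i)⟩

/-- The empty configuration. -/
def Conf.empty : Conf 0 :=
  ⟨fun i => i.elim0, fun i => i.elim0, fun i => i.elim0⟩

/-- Horizontal stacking of configurations: `x` is squeezed into the left half and `y` into
the right half of the unit square. -/
noncomputable def Conf.hstack {m n : ℕ} (x : Conf m) (y : Conf n) : Conf (m + n) :=
  ⟨fun i => Sum.elim (fun a => ((x.1 a).1 / 2, (x.1 a).2))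
      (fun b => (((y.1 b).1 + 1) / 2, (y.1 b).2)) (finSumFinEquiv.symm i), by
    constructor
    · intro i j hij
      dsimp only at hij
      apply finSumFinEquiv.symm.injective
      rcases ha : finSumFinEquiv.symm i with a | a <;>
        rcases hb : finSumFinEquiv.symm j with b | b <;>
        rw [ha, hb] at hij <;>
        simp only [Sum.elim_inl, Sum.elim_inr, Prod.mk.injEq] at hij
      · have hx : x.1 a = x.1 b := Prod.ext (by linarith [hij.1]) hij.2
        rw [x.2.1 hx]
      · exfalso
        have hxa := (x.2.2 a).1
        have hyb := (y.2.2 b).1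
        simp only [mem_Ioo] at hxa hyb
        linarith [hij.1, hxa.1, hxa.2, hyb.1, hyb.2]
      · exfalso
        have hxb := (x.2.2 b).1
        have hya := (y.2.2 a).1
        simp only [mem_Ioo] at hxb hya
        linarith [hij.1, hxb.1, hxb.2, hya.1, hya.2]
      · have hy : y.1 a = y.1 b := Prod.ext (by linarith [hij.1]) hij.2
        rw [y.2.1 hy]
    · intro i
      dsimp only
      rcases ha : finSumFinEquiv.symm i with a | a
      · have hx1 := (x.2.2 a).1
        have hx2 := (x.2.2 a).2
        simp only [mem_Ioo] at hx1 hx2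
        simp only [Sum.elim_inl, Set.mem_prod, Set.mem_Ioo]
        exact ⟨⟨by linarith [hx1.1], by linarith [hx1.2]⟩, hx2⟩
      · have hy1 := (y.2.2 a).1
        have hy2 := (y.2.2 a).2
        simp only [mem_Ioo] at hy1 hy2
        simp only [Sum.elim_inr, Set.mem_prod, Set.mem_Ioo]
        exact ⟨⟨by linarith [hy1.1], by linarith [hy1.2]⟩, hy2⟩⟩

/-- Vertical stacking of configurations: `x` is squeezed into the top half and `y` into
the bottom half of the unit square. -/
noncomputable def Conf.vstack {m n : ℕ} (x : Conf m) (y : Conf n) : Conf (m + n) :=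
  ⟨fun i => Sum.elim (fun a => ((x.1 a).1, ((x.1 a).2 + 1) / 2))
      (fun b => ((y.1 b).1, (y.1 b).2 / 2)) (finSumFinEquiv.symm i), by
    constructor
    · intro i j hij
      dsimp only at hij
      apply finSumFinEquiv.symm.injective
      rcases ha : finSumFinEquiv.symm i with a | a <;>
        rcases hb : finSumFinEquiv.symm j with b | b <;>
        rw [ha, hb] at hij <;>
        simp only [Sum.elim_inl, Sum.elim_inr, Prod.mk.injEq] at hij
      · have hx : x.1 a = x.1 b := Prod.ext hij.1 (by linarith [hij.2])
        rw [x.2.1 hx]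
      · exfalso
        have hxa := (x.2.2 a).2
        have hyb := (y.2.2 b).2
        simp only [mem_Ioo] at hxa hyb
        linarith [hij.2, hxa.1, hxa.2, hyb.1, hyb.2]
      · exfalso
        have hxb := (x.2.2 b).2
        have hya := (y.2.2 a).2
        simp only [mem_Ioo] at hxb hya
        linarith [hij.2, hxb.1, hxb.2, hya.1, hya.2]
      · have hy : y.1 a = y.1 b := Prod.ext hij.1 (by linarith [hij.2])
        rw [y.2.1 hy]
    · intro i
      dsimp only
      rcases ha : finSumFinEquiv.symm i with a | a
      · have hx1 := (x.2.2 a).1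
        have hx2 := (x.2.2 a).2
        simp only [mem_Ioo] at hx1 hx2
        simp only [Sum.elim_inl, Set.mem_prod, Set.mem_Ioo]
        exact ⟨hx1, by constructor <;> linarith [hx2.1, hx2.2]⟩
      · have hy1 := (y.2.2 a).1
        have hy2 := (y.2.2 a).2
        simp only [mem_Ioo] at hy1 hy2
        simp only [Sum.elim_inr, Set.mem_prod, Set.mem_Ioo]
        exact ⟨hy1, by constructor <;> linarith [hy2.1, hy2.2]⟩⟩


private lemma convex_mem' {a b t : ℝ} (ha : a ∈ Ioo (0:ℝ) 1) (hb : b ∈ Ioo (0:ℝ) 1)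
    (ht0 : 0 ≤ t) (ht1 : t ≤ 1) : (1-t)*a + t*b ∈ Ioo (0:ℝ) 1 := by
  obtain ⟨ha0, ha1⟩ := ha; obtain ⟨hb0, hb1⟩ := hb
  constructor <;> rcases le_total a b with h | h <;> nlinarith

private lemma convex_lt' {a b c d t : ℝ} (hab : a < b) (hcd : c < d) (ht0 : 0 ≤ t)
    (ht1 : t ≤ 1) : (1-t)*a + t*c < (1-t)*b + t*d := by
  rcases eq_or_lt_of_le ht1 with h | h
  · nlinarith
  · nlinarith

private lemma slideEquiv_of_strictMono {n : ℕ} (x y : Conf n) (φ : ℝ → ℝ)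
    (hφ : StrictMono φ) (hmap : ∀ i, y.1 i = (φ ((x.1 i).1), (x.1 i).2)) :
    SlideEquiv x y := by
  have hh : ∀ i, (y.1 i).2 = (x.1 i).2 := fun i => by rw [hmap i]
  have hord : ∀ i j, (x.1 i).1 < (x.1 j).1 → (y.1 i).1 < (y.1 j).1 := fun i j h => by
    rw [hmap i, hmap j]; exact hφ h
  have hmem : ∀ (t : unitInterval) (i : Fin n),
      ((1-(t:ℝ))*(x.1 i).1 + (t:ℝ)*(y.1 i).1, (x.1 i).2) ∈ Ioo (0:ℝ) 1 ×ˢ Ioo (0:ℝ) 1 :=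
    fun t i => ⟨convex_mem' (x.2.2 i).1 (y.2.2 i).1 t.2.1 t.2.2, (x.2.2 i).2⟩
  have hinj : ∀ t : unitInterval, Function.Injective
      (fun i => ((1-(t:ℝ))*(x.1 i).1 + (t:ℝ)*(y.1 i).1, (x.1 i).2) : Fin n → ℝ × ℝ) := by
    intro t i j hij
    simp only [Prod.mk.injEq] at hij
    by_contra hne
    rcases lt_trichotomy ((x.1 i).1) ((x.1 j).1) with h | h | h
    · exact absurd hij.1 (ne_of_lt (convex_lt' h (hord i j h) t.2.1 t.2.2))
    · exact hne (x.2.1 (Prod.ext h hij.2))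
    · exact absurd hij.1 (ne_of_gt (convex_lt' h (hord j i h) t.2.1 t.2.2))
  refine ⟨⟨⟨fun t => ⟨fun i => ((1-(t:ℝ))*(x.1 i).1 + (t:ℝ)*(y.1 i).1, (x.1 i).2),
      hinj t, hmem t⟩, ?_⟩, ?_, ?_⟩, ?_⟩
  · apply Continuous.subtype_mk
    apply continuous_pi
    intro i
    exact ((continuous_const.sub continuous_subtype_val).mul continuous_const |>.add
      (continuous_subtype_val.mul continuous_const)).prodMk continuous_const
  · exact Subtype.ext (funext fun i => Prod.ext (by norm_num) rfl)
  · exact Subtype.ext (funext fun i => Prod.ext (by norm_num) (hh i).symm)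
  · intro t i; rfl

private lemma hstack_apply_castAdd {m n : ℕ} (x : Conf m) (y : Conf n) (a : Fin m) :
    (Conf.hstack x y).1 (Fin.castAdd n a) = ((x.1 a).1 / 2, (x.1 a).2) := by
  simp [Conf.hstack, finSumFinEquiv_symm_apply_castAdd]

private lemma hstack_apply_natAdd {m n : ℕ} (x : Conf m) (y : Conf n) (b : Fin n) :
    (Conf.hstack x y).1 (Fin.natAdd m b) = (((y.1 b).1 + 1) / 2, (y.1 b).2) := by
  simp [Conf.hstack, finSumFinEquiv_symm_apply_natAdd]

private lemma reindex_apply {m n : ℕ} (h : m = n) (c : Conf m) (k : Fin n) :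
    (Conf.reindex (finCongr h) c).1 k = c.1 (Fin.cast h.symm k) := rfl

/-- Horizontal stacking of configurations is strictly associative and unital up to slide
equivalence: `(x | y) | z` and `x | (y | z)` are slide-equivalent (identifying index sets
along the canonical bijection), and `x | ∅` and `∅ | x` are each slide-equivalent to `x`. -/
theorem hstack_assoc_unital {m n p : ℕ} (x : Conf m) (y : Conf n) (z : Conf p) :
    SlideEquiv (Conf.reindex (finCongr (Nat.add_assoc m n p))
        (Conf.hstack (Conf.hstack x y) z))
      (Conf.hstack x (Conf.hstack y z)) ∧
    SlideEquiv (Conf.reindex (finCongr (Nat.add_zero m)) (Conf.hstack x Conf.empty)) x ∧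
    SlideEquiv (Conf.reindex (finCongr (Nat.zero_add m)) (Conf.hstack Conf.empty x)) x := by
  have hφm : StrictMono (fun u : ℝ => min (2*u) (min (u+1/4) (u/2+1/2))) := by
    intro a b h
    simp only [lt_min_iff, min_lt_iff]
    exact ⟨Or.inl (by linarith), Or.inr (Or.inl (by linarith)), Or.inr (Or.inr (by linarith))⟩
  refine ⟨?_, ?_, ?_⟩
  · apply slideEquiv_of_strictMono _ _ _ hφm
    intro k
    induction k using Fin.addCases with
    | left a =>
      have hL : (Conf.reindex (finCongr (Nat.add_assoc m n p))
          (Conf.hstack (Conf.hstack x y) z)).1 (Fin.castAdd (n+p) a)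
          = (((x.1 a).1 / 2) / 2, (x.1 a).2) := by
        rw [reindex_apply]
        have : Fin.cast (Nat.add_assoc m n p).symm (Fin.castAdd (n+p) a)
            = Fin.castAdd p (Fin.castAdd n a) := rfl
        rw [this, hstack_apply_castAdd, hstack_apply_castAdd]
      rw [hL, hstack_apply_castAdd]
      have hb := (x.2.2 a).1
      simp only [mem_Ioo] at hb
      have : min (2*((x.1 a).1/2/2)) (min ((x.1 a).1/2/2+1/4) ((x.1 a).1/2/2/2+1/2))
          = (x.1 a).1/2 := by
        rw [min_eq_left (le_min (by linarith) (by linarith))]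
        ring
      simp only [this]
    | right bc =>
      induction bc using Fin.addCases with
      | left b =>
        have hL : (Conf.reindex (finCongr (Nat.add_assoc m n p))
            (Conf.hstack (Conf.hstack x y) z)).1 (Fin.natAdd m (Fin.castAdd p b))
            = ((((y.1 b).1 + 1) / 2) / 2, (y.1 b).2) := by
          rw [reindex_apply]
          have : Fin.cast (Nat.add_assoc m n p).symm (Fin.natAdd m (Fin.castAdd p b))
              = Fin.castAdd p (Fin.natAdd m b) := rfl
          rw [this, hstack_apply_castAdd, hstack_apply_natAdd]
        rw [hL, hstack_apply_natAdd, hstack_apply_castAdd]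
        have hb := (y.2.2 b).1
        simp only [mem_Ioo] at hb
        have : min (2*(((y.1 b).1+1)/2/2)) (min (((y.1 b).1+1)/2/2+1/4) (((y.1 b).1+1)/2/2/2+1/2))
            = ((y.1 b).1/2 + 1)/2 := by
          rw [min_eq_right (min_le_of_left_le (by linarith)),
            min_eq_left (by linarith)]
          ring
        simp only [this]
      | right c =>
        have hL : (Conf.reindex (finCongr (Nat.add_assoc m n p))
            (Conf.hstack (Conf.hstack x y) z)).1 (Fin.natAdd m (Fin.natAdd n c))
            = (((z.1 c).1 + 1) / 2, (z.1 c).2) := by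
          rw [reindex_apply]
          have : Fin.cast (Nat.add_assoc m n p).symm (Fin.natAdd m (Fin.natAdd n c))
              = Fin.natAdd (m+n) c := by
            apply Fin.ext; simp [Nat.add_assoc]
          rw [this, hstack_apply_natAdd]
        rw [hL, hstack_apply_natAdd, hstack_apply_natAdd]
        have hb := (z.2.2 c).1
        simp only [mem_Ioo] at hb
        have : min (2*(((z.1 c).1+1)/2)) (min (((z.1 c).1+1)/2+1/4) (((z.1 c).1+1)/2/2+1/2))
            = ((((z.1 c).1+1)/2)+1)/2 := by
          rw [min_eq_right (min_le_of_right_le (by linarith)),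
            min_eq_right (by linarith)]
          ring
        simp only [this]
  · apply slideEquiv_of_strictMono _ _ (fun u : ℝ => 2*u) (fun a b h => by dsimp; linarith)
    intro i
    have hL : (Conf.reindex (finCongr (Nat.add_zero m)) (Conf.hstack x Conf.empty)).1 i
        = ((x.1 i).1 / 2, (x.1 i).2) := by
      rw [reindex_apply]
      have : Fin.cast (Nat.add_zero m).symm i = Fin.castAdd 0 i := rfl
      rw [this, hstack_apply_castAdd]
    rw [hL]
    exact Prod.ext (by dsimp; ring) rfl
  · apply slideEquiv_of_strictMono _ _ (fun u : ℝ => 2*u - 1) (fun a b h => by dsimp; linarith)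
    intro i
    have hL : (Conf.reindex (finCongr (Nat.zero_add m)) (Conf.hstack Conf.empty x)).1 i
        = (((x.1 i).1 + 1) / 2, (x.1 i).2) := by
      rw [reindex_apply]
      have : Fin.cast (Nat.zero_add m).symm i = Fin.natAdd 0 i := by
        apply Fin.ext; simp
      rw [this, hstack_apply_natAdd]
    rw [hL]
    exact Prod.ext (by dsimp; ring) rfl
end

section
/- Vertical stacking is compatible with slide equivalence: for configurations x, x' of m points and y, y' of n points in the open unit square, x ⊗ y is slide-equivalent to x' ⊗ y' if and only if x is slide-equivalent to x' and y is slide-equivalent to y'. Moreover, any configuration z of m+n points that is slide-equivalent to x ⊗ y is itself of the form x'' ⊗ y'' for some configurations x'' slide-equivalent to x and y'' slide-equivalent to y. Hence the slide-equivalence class of x ⊗ y depends only on the slide-equivalence classes of x and y, and consists exactly of vertical stackings of members of those classes. -/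
open Set

lemma continuous_conf {n : ℕ} {X : Type*} [TopologicalSpace X] {f : X → Conf n}
    (h : Continuous fun t => (f t).1) : Continuous f :=
  continuous_induced_rng.2 h

lemma vstack_apply_inl {m n : ℕ} (x : Conf m) (y : Conf n) (a : Fin m) :
    (Conf.vstack x y).1 (finSumFinEquiv (Sum.inl a)) = ((x.1 a).1, ((x.1 a).2 + 1) / 2) := by
  simp [Conf.vstack]

lemma vstack_apply_inr {m n : ℕ} (x : Conf m) (y : Conf n) (b : Fin n) :
    (Conf.vstack x y).1 (finSumFinEquiv (Sum.inr b)) = ((y.1 b).1, (y.1 b).2 / 2) := by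
  simp [Conf.vstack]

lemma vstack_inj {m n : ℕ} {x x' : Conf m} {y y' : Conf n}
    (h : Conf.vstack x y = Conf.vstack x' y') : x = x' ∧ y = y' := by
  constructor
  · apply Subtype.ext; funext a
    have h1 : (Conf.vstack x y).1 (finSumFinEquiv (Sum.inl a))
        = (Conf.vstack x' y').1 (finSumFinEquiv (Sum.inl a)) := by rw [h]
    rw [vstack_apply_inl, vstack_apply_inl, Prod.mk.injEq] at h1
    exact Prod.ext h1.1 (by linarith [h1.2])
  · apply Subtype.ext; funext b
    have h1 : (Conf.vstack x y).1 (finSumFinEquiv (Sum.inr b))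
        = (Conf.vstack x' y').1 (finSumFinEquiv (Sum.inr b)) := by rw [h]
    rw [vstack_apply_inr, vstack_apply_inr, Prod.mk.injEq] at h1
    exact Prod.ext h1.1 (by linarith [h1.2])

lemma vstack_decompose {m n : ℕ} (x : Conf m) (y : Conf n) (z : Conf (m + n))
    (h : SlideEquiv z (Conf.vstack x y)) :
    ∃ (x'' : Conf m) (y'' : Conf n),
      SlideEquiv x'' x ∧ SlideEquiv y'' y ∧ z = Conf.vstack x'' y'' := by
  obtain ⟨γ, hγ⟩ := h
  have htop : ∀ (t : unitInterval) (a : Fin m),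
      ((γ t).1 (finSumFinEquiv (Sum.inl a))).2 = ((x.1 a).2 + 1) / 2 := by
    intro t a
    have h1 := hγ t (finSumFinEquiv (Sum.inl a))
    have h2 := hγ 1 (finSumFinEquiv (Sum.inl a))
    rw [γ.target, vstack_apply_inl] at h2
    rw [h1, ← h2]
  have hbot : ∀ (t : unitInterval) (b : Fin n),
      ((γ t).1 (finSumFinEquiv (Sum.inr b))).2 = (y.1 b).2 / 2 := by
    intro t b
    have h1 := hγ t (finSumFinEquiv (Sum.inr b))
    have h2 := hγ 1 (finSumFinEquiv (Sum.inr b))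
    rw [γ.target, vstack_apply_inr] at h2
    rw [h1, ← h2]
  have injtop : ∀ t : unitInterval, Function.Injective
      (fun a : Fin m => ((((γ t).1 (finSumFinEquiv (Sum.inl a))).1, (x.1 a).2) : ℝ × ℝ)) := by
    intro t a b hab
    simp only [Prod.mk.injEq] at hab
    have he : (γ t).1 (finSumFinEquiv (Sum.inl a)) = (γ t).1 (finSumFinEquiv (Sum.inl b)) := by
      refine Prod.ext hab.1 ?_
      rw [htop t a, htop t b, hab.2]
    have := finSumFinEquiv.injective ((γ t).2.1 he)
    simpa using this
  have memtop : ∀ (t : unitInterval) (a : Fin m),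
      ((((γ t).1 (finSumFinEquiv (Sum.inl a))).1, (x.1 a).2) : ℝ × ℝ)
        ∈ Ioo (0:ℝ) 1 ×ˢ Ioo (0:ℝ) 1 := by
    intro t a
    exact ⟨((γ t).2.2 _).1, (x.2.2 a).2⟩
  have injbot : ∀ t : unitInterval, Function.Injective
      (fun b : Fin n => ((((γ t).1 (finSumFinEquiv (Sum.inr b))).1, (y.1 b).2) : ℝ × ℝ)) := by
    intro t a b hab
    simp only [Prod.mk.injEq] at hab
    have he : (γ t).1 (finSumFinEquiv (Sum.inr a)) = (γ t).1 (finSumFinEquiv (Sum.inr b)) := by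
      refine Prod.ext hab.1 ?_
      rw [hbot t a, hbot t b, hab.2]
    have := finSumFinEquiv.injective ((γ t).2.1 he)
    simpa using this
  have membot : ∀ (t : unitInterval) (b : Fin n),
      ((((γ t).1 (finSumFinEquiv (Sum.inr b))).1, (y.1 b).2) : ℝ × ℝ)
        ∈ Ioo (0:ℝ) 1 ×ˢ Ioo (0:ℝ) 1 := by
    intro t b
    exact ⟨((γ t).2.2 _).1, (y.2.2 b).2⟩
  set f : unitInterval → Conf m := fun t =>
    ⟨fun a => (((γ t).1 (finSumFinEquiv (Sum.inl a))).1, (x.1 a).2), injtop t, memtop t⟩ with hf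
  set g : unitInterval → Conf n := fun t =>
    ⟨fun b => (((γ t).1 (finSumFinEquiv (Sum.inr b))).1, (y.1 b).2), injbot t, membot t⟩ with hg
  have hcontf : Continuous f := by
    refine continuous_conf (continuous_pi fun a => Continuous.prodMk ?_ continuous_const)
    exact continuous_fst.comp ((continuous_apply _).comp (continuous_subtype_val.comp γ.continuous))
  have hcontg : Continuous g := by
    refine continuous_conf (continuous_pi fun b => Continuous.prodMk ?_ continuous_const)
    exact continuous_fst.comp ((continuous_apply _).comp (continuous_subtype_val.comp γ.continuous))
  have hf1 : f 1 = x := by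
    apply Subtype.ext
    funext a
    show (((γ 1).1 (finSumFinEquiv (Sum.inl a))).1, (x.1 a).2) = x.1 a
    rw [γ.target, vstack_apply_inl]
  have hg1 : g 1 = y := by
    apply Subtype.ext
    funext b
    show (((γ 1).1 (finSumFinEquiv (Sum.inr b))).1, (y.1 b).2) = y.1 b
    rw [γ.target, vstack_apply_inr]
  refine ⟨f 0, g 0, ⟨⟨⟨f, hcontf⟩, rfl, hf1⟩, fun t a => rfl⟩,
    ⟨⟨⟨g, hcontg⟩, rfl, hg1⟩, fun t b => rfl⟩, ?_⟩
  apply Subtype.ext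
  funext k
  show z.1 k = Sum.elim _ _ (finSumFinEquiv.symm k)
  rcases hk : finSumFinEquiv.symm k with a | a
  · have hk' : k = finSumFinEquiv (Sum.inl a) := by rw [← hk]; simp
    simp only [Sum.elim_inl]
    show z.1 k = (((f 0).1 a).1, (((f 0).1 a).2 + 1) / 2)
    have hz2 : (z.1 k).2 = ((x.1 a).2 + 1) / 2 := by
      have := htop 0 a
      rw [γ.source, ← hk'] at this
      exact this
    have hz1 : (z.1 k).1 = ((f 0).1 a).1 := by
      show (z.1 k).1 = ((γ 0).1 (finSumFinEquiv (Sum.inl a))).1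
      rw [γ.source, ← hk']
    refine Prod.ext hz1 ?_
    rw [hz2]
  · have hk' : k = finSumFinEquiv (Sum.inr a) := by rw [← hk]; simp
    simp only [Sum.elim_inr]
    show z.1 k = (((g 0).1 a).1, ((g 0).1 a).2 / 2)
    have hz2 : (z.1 k).2 = (y.1 a).2 / 2 := by
      have := hbot 0 a
      rw [γ.source, ← hk'] at this
      exact this
    have hz1 : (z.1 k).1 = ((g 0).1 a).1 := by
      show (z.1 k).1 = ((γ 0).1 (finSumFinEquiv (Sum.inr a))).1
      rw [γ.source, ← hk']
    refine Prod.ext hz1 ?_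
    rw [hz2]

/-- Vertical stacking is compatible with slide equivalence: `x ⊗ y` is slide-equivalent to
`x' ⊗ y'` if and only if `x` is slide-equivalent to `x'` and `y` is slide-equivalent to
`y'`; moreover any configuration slide-equivalent to `x ⊗ y` is itself a vertical stacking
of configurations slide-equivalent to `x` and `y`.  Hence the slide-equivalence class of
`x ⊗ y` depends only on those of `x` and `y`, and consists exactly of vertical stackings of
members of those classes. -/
theorem vstack_slideEquiv {m n : ℕ} (x x' : Conf m) (y y' : Conf n) :
    (SlideEquiv (Conf.vstack x y) (Conf.vstack x' y') ↔
      SlideEquiv x x' ∧ SlideEquiv y y') ∧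
    ∀ z : Conf (m + n), SlideEquiv z (Conf.vstack x y) →
      ∃ (x'' : Conf m) (y'' : Conf n),
        SlideEquiv x'' x ∧ SlideEquiv y'' y ∧ z = Conf.vstack x'' y''  := by
  constructor
  · constructor
    · intro h
      obtain ⟨x'', y'', hx, hy, heq⟩ := vstack_decompose x' y' (Conf.vstack x y) h
      obtain ⟨hx', hy'⟩ := vstack_inj heq
      exact ⟨hx' ▸ hx, hy' ▸ hy⟩
    · rintro ⟨⟨γ, hγ⟩, ⟨δ, hδ⟩⟩
      have hcont : Continuous (fun t => Conf.vstack (γ t) (δ t)) := by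
        refine continuous_conf (continuous_pi fun k => ?_)
        rcases hk : finSumFinEquiv.symm k with a | a <;>
          simp only [Conf.vstack, hk, Sum.elim_inl, Sum.elim_inr]
        · refine Continuous.prodMk ?_ (Continuous.div_const (Continuous.add ?_ continuous_const) 2)
          · exact continuous_fst.comp ((continuous_apply _).comp
              (continuous_subtype_val.comp γ.continuous))
          · exact continuous_snd.comp ((continuous_apply _).comp
              (continuous_subtype_val.comp γ.continuous))
        · refine Continuous.prodMk ?_ (Continuous.div_const ?_ 2)
          · exact continuous_fst.comp ((continuous_apply _).comp
              (continuous_subtype_val.comp δ.continuous))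
          · exact continuous_snd.comp ((continuous_apply _).comp
              (continuous_subtype_val.comp δ.continuous))
      refine ⟨⟨⟨fun t => Conf.vstack (γ t) (δ t), hcont⟩, ?_, ?_⟩, ?_⟩
      · show Conf.vstack (γ 0) (δ 0) = Conf.vstack x y
        rw [γ.source, δ.source]
      · show Conf.vstack (γ 1) (δ 1) = Conf.vstack x' y'
        rw [γ.target, δ.target]
      · intro t k
        show ((Conf.vstack (γ t) (δ t)).1 k).2 = ((Conf.vstack x y).1 k).2
        rcases hk : finSumFinEquiv.symm k with a | a <;>
          simp only [Conf.vstack, hk, Sum.elim_inl, Sum.elim_inr]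
        · rw [hγ t a]
        · rw [hδ t a]
  · exact vstack_decompose x y
end
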